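/- arXiv:1612.00252 — 12 statements merged into one kernel-verified Lean document; each statement's English description precedes it below -/
import Mathlib

section
/- Let A be a collection of partial functions on a base X closed under domain-disjoint union wherever defined. Let Y be a set disjoint from X with a bijection f : X → Y, and define θ(a) = ρ(a) ∪ {(f(x), f(x)) : x ∈ dom(ρ(a))} where ρ is the identity representation. Then for all a, b ∈ A, θ(a) and θ(b) have disjoint domains if and only if θ(a) ∩ θ(b) = ∅; hence θ is simultaneously a representation by partial functions under domain-disjoint union and a representation by sets under disjoint union. -/
/-! The points `(f x, f x)` added by `θ` lie in `Y × Y`, away from the base `X × X`; hence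
`θ a ∩ X × X = a` and `θ a` stays functional. The domain of `θ a` is `dom a ∪ f '' dom a`,
split between `X` and `Y`, so by injectivity of `f` on `X` the domains of `θ a` and `θ b` meet
iff `dom a` and `dom b` do. Relations with disjoint domains are disjoint, and conversely a
common point `x` of `dom a` and `dom b` puts `(f x, f x)` into both `θ a` and `θ b`: the added
diagonal is what makes disjointness of sets as strong as disjointness of domains.
-/

/-- The domain of a partial function viewed as a set of ordered pairs. -/
def pfDom {U : Type*} (f : Set (U × U)) : Set U := {x | ∃ y, (x, y) ∈ f}

/-- The map θ of Statement 2: `θ a = a ∪ {(f x, f x) : x ∈ dom a}`. -/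
def theta {U : Type*} (f : U → U) (a : Set (U × U)) : Set (U × U) :=
  a ∪ (fun x => (f x, f x)) '' pfDom a

open Set

def IsFunctional {U : Type*} (a : Set (U × U)) : Prop :=
  ∀ p ∈ a, ∀ q ∈ a, p.1 = q.1 → p.2 = q.2

section

variable {U : Type*}

lemma pfDom_eq_image_fst (a : Set (U × U)) : pfDom a = Prod.fst '' a := by
  ext x
  simp [pfDom]

lemma pfDom_union (a b : Set (U × U)) : pfDom (a ∪ b) = pfDom a ∪ pfDom b := by
  simp only [pfDom_eq_image_fst, image_union]

lemma pfDom_image_diag (f : U → U) (s : Set U) :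
    pfDom ((fun x => (f x, f x)) '' s) = f '' s := by
  rw [pfDom_eq_image_fst, image_image]

lemma pfDom_theta (f : U → U) (a : Set (U × U)) :
    pfDom (theta f a) = pfDom a ∪ f '' pfDom a := by
  rw [theta, pfDom_union, pfDom_image_diag]

lemma pfDom_subset_of_subset_prod {a : Set (U × U)} {X S : Set U} (h : a ⊆ X ×ˢ S) :
    pfDom a ⊆ X := by
  rw [pfDom_eq_image_fst]
  exact (image_mono h).trans (fst_image_prod_subset _ _)

lemma disjoint_of_disjoint_pfDom {a b : Set (U × U)} (h : Disjoint (pfDom a) (pfDom b)) :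
    Disjoint a b := by
  rw [pfDom_eq_image_fst, pfDom_eq_image_fst] at h
  exact h.of_image

lemma theta_union (f : U → U) (a b : Set (U × U)) :
    theta f (a ∪ b) = theta f a ∪ theta f b := by
  rw [theta, theta, theta, pfDom_union, image_union, union_union_union_comm]

lemma IsFunctional.union {a b : Set (U × U)} (ha : IsFunctional a) (hb : IsFunctional b)
    (hab : Disjoint (pfDom a) (pfDom b)) : IsFunctional (a ∪ b) := by
  have cross : ∀ p ∈ a, ∀ q ∈ b, p.1 ≠ q.1 := fun p hp q hq hpq =>
    disjoint_left.1 hab ⟨p.2, hp⟩ (hpq ▸ ⟨q.2, hq⟩ : p.1 ∈ pfDom b)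
  rintro p (hp | hp) q (hq | hq) hpq
  exacts [ha p hp q hq hpq, (cross p hp q hq hpq).elim, (cross q hq p hp hpq.symm).elim,
    hb p hp q hq hpq]

lemma isFunctional_image_diag (f : U → U) (s : Set U) :
    IsFunctional ((fun x => (f x, f x)) '' s) := by
  rintro _ ⟨x, -, rfl⟩ _ ⟨y, -, rfl⟩ hxy
  exact hxy

lemma disjoint_pfDom_of_disjoint_theta {f : U → U} {a b : Set (U × U)}
    (h : Disjoint (theta f a) (theta f b)) : Disjoint (pfDom a) (pfDom b) :=
  disjoint_left.2 fun x hxa hxb =>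
    disjoint_left.1 h (Or.inr ⟨x, hxa, rfl⟩) (Or.inr ⟨x, hxb, rfl⟩)

variable {X Y : Set U} {f : U → U} {a b : Set (U × U)}

lemma IsFunctional.theta (ha : IsFunctional a) (haX : a ⊆ X ×ˢ X) (hXY : Disjoint X Y)
    (hf : MapsTo f X Y) : IsFunctional (theta f a) := by
  refine ha.union (isFunctional_image_diag f _) ?_
  rw [pfDom_image_diag]
  exact hXY.mono (pfDom_subset_of_subset_prod haX)
    ((image_mono (pfDom_subset_of_subset_prod haX)).trans hf.image_subset)

lemma theta_inter_prod (haX : a ⊆ X ×ˢ X) (hXY : Disjoint X Y) (hf : MapsTo f X Y) :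
    theta f a ∩ X ×ˢ X = a := by
  refine Subset.antisymm ?_ fun p hp => ⟨Or.inl hp, haX hp⟩
  rintro p ⟨hp | ⟨x, hx, rfl⟩, hpX⟩
  · exact hp
  · exact (hXY.ne_of_mem hpX.1 (hf (pfDom_subset_of_subset_prod haX hx)) rfl).elim

lemma injOn_theta {A : Set (Set (U × U))} (hA : ∀ a ∈ A, a ⊆ X ×ˢ X) (hXY : Disjoint X Y)
    (hf : MapsTo f X Y) : InjOn (theta f) A := fun a ha b hb hab => by
  rw [← theta_inter_prod (hA a ha) hXY hf, ← theta_inter_prod (hA b hb) hXY hf, hab]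

lemma disjoint_pfDom_theta_iff (haX : a ⊆ X ×ˢ X) (hbX : b ⊆ X ×ˢ X) (hXY : Disjoint X Y)
    (hf : InjOn f X) (hfXY : MapsTo f X Y) :
    Disjoint (pfDom (theta f a)) (pfDom (theta f b)) ↔ Disjoint (pfDom a) (pfDom b) := by
  have hDa := pfDom_subset_of_subset_prod haX
  have hDb := pfDom_subset_of_subset_prod hbX
  have hfDa := (image_mono hDa).trans hfXY.image_subset
  have hfDb := (image_mono hDb).trans hfXY.image_subset
  rw [pfDom_theta, pfDom_theta, disjoint_union_left, disjoint_union_right, disjoint_union_right]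
  exact ⟨fun h => h.1.1, fun h =>
    ⟨⟨h, hXY.mono hDa hfDb⟩, (hXY.mono hDb hfDa).symm, h.image hf hDa hDb⟩⟩

lemma disjoint_theta_iff (haX : a ⊆ X ×ˢ X) (hbX : b ⊆ X ×ˢ X) (hXY : Disjoint X Y)
    (hf : InjOn f X) (hfXY : MapsTo f X Y) :
    Disjoint (theta f a) (theta f b) ↔ Disjoint (pfDom a) (pfDom b) :=
  ⟨disjoint_pfDom_of_disjoint_theta, fun h =>
    disjoint_of_disjoint_pfDom ((disjoint_pfDom_theta_iff haX hbX hXY hf hfXY).2 h)⟩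

end

theorem stmt_2_general {U : Type*} (X Y : Set U) (hXY : Disjoint X Y)
    (f : U → U) (hf : Set.BijOn f X Y)
    (A : Set (Set (U × U)))
    (hfun : ∀ a ∈ A, ∀ p ∈ a, ∀ q ∈ a, (p : U × U).1 = (q : U × U).1 → p.2 = q.2)
    (hbase : ∀ a ∈ A, a ⊆ X ×ˢ X) :
    -- the key property: disjoint domains iff disjoint images
    (∀ a ∈ A, ∀ b ∈ A, (pfDom (theta f a) ∩ pfDom (theta f b) = ∅ ↔
        theta f a ∩ theta f b = ∅)) ∧
    -- θ is a representation by partial functions under domain-disjoint union: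
    Set.InjOn (theta f) A ∧
    (∀ a ∈ A, ∀ p ∈ theta f a, ∀ q ∈ theta f a, (p : U × U).1 = (q : U × U).1 → p.2 = q.2) ∧
    (∀ a ∈ A, ∀ b ∈ A, (pfDom a ∩ pfDom b = ∅ ↔ pfDom (theta f a) ∩ pfDom (theta f b) = ∅)) ∧
    (∀ a ∈ A, ∀ b ∈ A, pfDom a ∩ pfDom b = ∅ → theta f (a ∪ b) = theta f a ∪ theta f b) := by
  have hdom : ∀ a ∈ A, ∀ b ∈ A,
      Disjoint (pfDom (theta f a)) (pfDom (theta f b)) ↔ Disjoint (pfDom a) (pfDom b) :=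
    fun a ha b hb => disjoint_pfDom_theta_iff (hbase a ha) (hbase b hb) hXY hf.injOn hf.mapsTo
  simp only [← disjoint_iff_inter_eq_empty]
  exact ⟨fun a ha b hb => (hdom a ha b hb).trans
      (disjoint_theta_iff (hbase a ha) (hbase b hb) hXY hf.injOn hf.mapsTo).symm,
    injOn_theta hbase hXY hf.mapsTo,
    fun a ha => IsFunctional.theta (hfun a ha) (hbase a ha) hXY hf.mapsTo,
    fun a ha b hb => (hdom a ha b hb).symm,
    fun a _ b _ _ => theta_union f a b⟩

/-- Let `A` be a collection of partial functions on a base `X` closed under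
domain-disjoint union, `Y` disjoint from `X` with a bijection `f : X → Y`, and
`θ a = a ∪ {(f x, f x) : x ∈ dom a}`.  Then images under `θ` have disjoint domains iff
they are disjoint as sets; hence `θ` is simultaneously a representation by partial
functions under domain-disjoint union and a representation by sets under disjoint union. -/
theorem stmt_2 {U : Type*} (X Y : Set U) (hXY : Disjoint X Y)
    (f : U → U) (hf : Set.BijOn f X Y)
    (A : Set (Set (U × U)))
    (hfun : ∀ a ∈ A, ∀ p ∈ a, ∀ q ∈ a, (p : U × U).1 = (q : U × U).1 → p.2 = q.2)
    (hbase : ∀ a ∈ A, a ⊆ X ×ˢ X)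
    (hA : ∀ a ∈ A, ∀ b ∈ A, pfDom a ∩ pfDom b = ∅ → a ∪ b ∈ A) :
    -- the key property: disjoint domains iff disjoint images
    (∀ a ∈ A, ∀ b ∈ A, (pfDom (theta f a) ∩ pfDom (theta f b) = ∅ ↔
        theta f a ∩ theta f b = ∅)) ∧
    -- θ is a representation by partial functions under domain-disjoint union:
    Set.InjOn (theta f) A ∧
    (∀ a ∈ A, ∀ p ∈ theta f a, ∀ q ∈ theta f a, (p : U × U).1 = (q : U × U).1 → p.2 = q.2) ∧
    (∀ a ∈ A, ∀ b ∈ A, (pfDom a ∩ pfDom b = ∅ ↔ pfDom (theta f a) ∩ pfDom (theta f b) = ∅)) ∧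
    (∀ a ∈ A, ∀ b ∈ A, pfDom a ∩ pfDom b = ∅ → theta f (a ∪ b) = theta f a ∪ theta f b) :=
  stmt_2_general X Y hXY f hf A hfun hbase
end

section
/- A partial (⊔•)-algebra A has a disjoint-union representation by sets if and only if there exists a family B of subsets of A, each ⊔•-prime, bi-closed and pairwise incombinable, such that (i) for all a ≠ b in A there is U ∈ B containing exactly one of a, b, and (ii) for all a, b ∈ A with a ⊔• b undefined there is U ∈ B containing both a and b. -/
/-!
A representation `θ : A → Set X` is recovered from, and recovers, the family of sets
`U_x = {a | x ∈ θ a}`, one for each point `x`: disjoint-union laws for `θ` say exactly that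
each `U_x` is prime, bi-closed and pairwise incombinable, injectivity of `θ` says that these
sets separate points, and `θ a ∩ θ b ≠ ∅` whenever `a ⊔• b` is undefined says that some `U_x`
contains both. Conversely a family `B` with these properties yields the representation
`a ↦ {U ∈ B | a ∈ U}` on the points `X = B`.
-/

namespace DisjointUnionRep

open Function

variable {A X : Type*} (op : A → A → Option A)

structure IsRep (θ : A → Set X) : Prop where
  injective : Injective θ
  isSome_iff : ∀ a b, (op a b).isSome ↔ θ a ∩ θ b = ∅
  map_op : ∀ a b c, op a b = some c → θ c = θ a ∪ θ b

def IsOpPrime (U : Set A) : Prop :=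
  ∀ a b c, op a b = some c → c ∈ U → a ∈ U ∨ b ∈ U

def IsBiClosed (U : Set A) : Prop :=
  ∀ a b c, op a b = some c → (a ∈ U ∨ b ∈ U) → c ∈ U

def IsIncombinable (U : Set A) : Prop :=
  ∀ a ∈ U, ∀ b ∈ U, op a b = none

section FromRep

variable {op} {θ : A → Set X}

def pointSet (θ : A → Set X) (x : X) : Set A := {a | x ∈ θ a}

theorem IsRep.isOpPrime_pointSet (hθ : IsRep op θ) (x : X) : IsOpPrime op (pointSet θ x) :=
  fun a b c hc hx => by
    simpa [pointSet, hθ.map_op a b c hc] using hx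

theorem IsRep.isBiClosed_pointSet (hθ : IsRep op θ) (x : X) : IsBiClosed op (pointSet θ x) :=
  fun a b c hc hx => by
    simpa [pointSet, hθ.map_op a b c hc] using hx

theorem IsRep.isIncombinable_pointSet (hθ : IsRep op θ) (x : X) :
    IsIncombinable op (pointSet θ x) := by
  intro a ha b hb
  by_contra hdef
  have hdisj : θ a ∩ θ b = ∅ := (hθ.isSome_iff a b).mp (Option.ne_none_iff_isSome.mp hdef)
  exact hdisj.subset ⟨ha, hb⟩

theorem exists_pointSet_separating (hθ : Injective θ) {a b : A} (hab : a ≠ b) :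
    ∃ x, (a ∈ pointSet θ x ∧ b ∉ pointSet θ x) ∨ (b ∈ pointSet θ x ∧ a ∉ pointSet θ x) := by
  obtain ⟨x, hx⟩ : ∃ x, ¬(x ∈ θ a ↔ x ∈ θ b) := by
    by_contra! h
    exact hab (hθ (Set.ext h))
  exact ⟨x, by simp only [pointSet, Set.mem_ofPred_eq]; tauto⟩

theorem IsRep.exists_pointSet_mem_mem (hθ : IsRep op θ) {a b : A} (hab : op a b = none) :
    ∃ x, a ∈ pointSet θ x ∧ b ∈ pointSet θ x := by
  have hne : θ a ∩ θ b ≠ ∅ := by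
    rw [ne_eq, ← hθ.isSome_iff, hab]
    exact Bool.false_ne_true
  exact Set.nonempty_iff_ne_empty.mpr hne

end FromRep

section ToRep

variable {op} {B : Set (Set A)}

def memberSets (B : Set (Set A)) (a : A) : Set (Set A) := {U | U ∈ B ∧ a ∈ U}

theorem memberSets_injective
    (hsep : ∀ a b : A, a ≠ b → ∃ U ∈ B, (a ∈ U ∧ b ∉ U) ∨ (b ∈ U ∧ a ∉ U)) :
    Injective (memberSets B) := by
  intro a b h
  by_contra hab
  obtain ⟨U, hU, hsepU⟩ := hsep a b hab
  have hiff : U ∈ memberSets B a ↔ U ∈ memberSets B b := by rw [h]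
  simp only [memberSets, Set.mem_ofPred_eq] at hiff
  tauto

theorem isSome_iff_memberSets_inter_eq_empty (hinc : ∀ U ∈ B, IsIncombinable op U)
    (hjoint : ∀ a b : A, op a b = none → ∃ U ∈ B, a ∈ U ∧ b ∈ U) (a b : A) :
    (op a b).isSome ↔ memberSets B a ∩ memberSets B b = ∅ := by
  rw [Set.eq_empty_iff_forall_notMem]
  constructor
  · rintro hdef U ⟨⟨hU, ha⟩, -, hb⟩
    simp [hinc U hU a ha b hb] at hdef
  · intro hdisj
    by_contra hdef
    obtain ⟨U, hU, ha, hb⟩ := hjoint a b (Option.not_isSome_iff_eq_none.mp hdef)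
    exact hdisj U ⟨⟨hU, ha⟩, hU, hb⟩

theorem memberSets_of_op_eq_some (hprime : ∀ U ∈ B, IsOpPrime op U)
    (hclosed : ∀ U ∈ B, IsBiClosed op U) {a b c : A} (hc : op a b = some c) :
    memberSets B c = memberSets B a ∪ memberSets B b := by
  ext U
  simp only [memberSets, Set.mem_union, Set.mem_ofPred_eq]
  constructor
  · rintro ⟨hU, hcU⟩
    exact (hprime U hU a b c hc hcU).imp (⟨hU, ·⟩) (⟨hU, ·⟩)
  · rintro (⟨hU, h⟩ | ⟨hU, h⟩)
    · exact ⟨hU, hclosed U hU a b c hc (Or.inl h)⟩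
    · exact ⟨hU, hclosed U hU a b c hc (Or.inr h)⟩

end ToRep

end DisjointUnionRep

open DisjointUnionRep in
/-- a partial `(⊔•)`-algebra has a disjoint-union representation by sets iff
there is a family `B` of `⊔•`-prime, bi-closed, pairwise-incombinable subsets of `A`
such that (i) distinct elements are separated by some `U ∈ B`, and (ii) any pair with
`a ⊔• b` undefined lies jointly in some `U ∈ B`. -/
theorem stmt_5 {A : Type} (op : A → A → Option A) :
    (∃ (X : Type) (θ : A → Set X),
        Function.Injective θ ∧
        (∀ a b, (op a b).isSome ↔ θ a ∩ θ b = ∅) ∧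
        (∀ a b c, op a b = some c → θ c = θ a ∪ θ b)) ↔
    (∃ B : Set (Set A),
        (∀ U ∈ B,
          (∀ a b c, op a b = some c → c ∈ U → a ∈ U ∨ b ∈ U) ∧            -- ⊔•-prime
          (∀ a b c, op a b = some c → (a ∈ U ∨ b ∈ U) → c ∈ U) ∧          -- bi-closed
          (∀ a ∈ U, ∀ b ∈ U, op a b = none)) ∧                            -- pairwise incombinable
        (∀ a b : A, a ≠ b → ∃ U ∈ B, (a ∈ U ∧ b ∉ U) ∨ (b ∈ U ∧ a ∉ U)) ∧
        (∀ a b : A, op a b = none → ∃ U ∈ B, a ∈ U ∧ b ∈ U)) := by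
  constructor
  · rintro ⟨X, θ, hinj, hdef, hun⟩
    have hθ : IsRep op θ := ⟨hinj, hdef, hun⟩
    refine ⟨Set.range (pointSet θ), ?_, ?_, ?_⟩
    · rintro U ⟨x, rfl⟩
      exact ⟨hθ.isOpPrime_pointSet x, hθ.isBiClosed_pointSet x, hθ.isIncombinable_pointSet x⟩
    · intro a b hab
      obtain ⟨x, hx⟩ := exists_pointSet_separating hinj hab
      exact ⟨_, ⟨x, rfl⟩, hx⟩
    · intro a b hab
      obtain ⟨x, hx⟩ := hθ.exists_pointSet_mem_mem hab
      exact ⟨_, ⟨x, rfl⟩, hx⟩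
  · rintro ⟨B, hB, hsep, hjoint⟩
    exact ⟨Set A, memberSets B, memberSets_injective hsep,
      isSome_iff_memberSets_inter_eq_empty (fun U hU => (hB U hU).2.2) hjoint,
      fun _ _ _ => memberSets_of_op_eq_some (fun U hU => (hB U hU).1)
        (fun U hU => (hB U hU).2.1)⟩
end

section
/- The substructure of the powerset of {1,2,3} (with disjoint union) obtained by removing the set {1,2,3} has no disjoint-union representation: there is no injective map θ on ℘{1,2,3} ∖ {{1,2,3}} into sets such that a ∪• b is defined and in the domain iff θ(a) ∩ θ(b) = ∅ and the union stays representable, respecting the inherited partial structure. Consequently, the class of disjoint-union-representable partial algebras is not closed under relational substructures. -/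
/-!
A disjoint-union representation `θ` sends disjoint joins to disjoint unions, so if `a ∪ b` and
`d` are represented with `θ d` disjoint from both `θ a` and `θ b`, then `θ (a ∪ b) = θ a ∪ θ b`
is disjoint from `θ d`, and totality forces the join `a ∪ b ∪ d` into the substructure.
For `{0}, {1}, {2} ⊆ Fin 3` every pairwise join is a proper subset, but the triple join is
`Set.univ`, which has been removed.
-/

theorem union_union_mem_of_disjoint_rep {α X : Type*} {P : Set α → Prop}
    (θ : {S // P S} → Set X)
    (hjoin : ∀ a b c : {S // P S}, (a : Set α) ∩ b = ∅ ∧ (a : Set α) ∪ b = c →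
      θ a ∩ θ b = ∅ ∧ θ a ∪ θ b = θ c)
    (htot : ∀ a b : {S // P S}, θ a ∩ θ b = ∅ →
      ∃ c : {S // P S}, (a : Set α) ∩ b = ∅ ∧ (a : Set α) ∪ b = c)
    {a b d : Set α} (ha : P a) (hb : P b) (hd : P d)
    (hab : P (a ∪ b)) (had : P (a ∪ d)) (hbd : P (b ∪ d))
    (hab₀ : a ∩ b = ∅) (had₀ : a ∩ d = ∅) (hbd₀ : b ∩ d = ∅) :
    P (a ∪ b ∪ d) := by
  have hθab := hjoin ⟨a, ha⟩ ⟨b, hb⟩ ⟨a ∪ b, hab⟩ ⟨hab₀, rfl⟩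
  have hθad := (hjoin ⟨a, ha⟩ ⟨d, hd⟩ ⟨a ∪ d, had⟩ ⟨had₀, rfl⟩).1
  have hθbd := (hjoin ⟨b, hb⟩ ⟨d, hd⟩ ⟨b ∪ d, hbd⟩ ⟨hbd₀, rfl⟩).1
  have hθ : θ ⟨a ∪ b, hab⟩ ∩ θ ⟨d, hd⟩ = ∅ := by
    rw [← hθab.2, Set.union_inter_distrib_right, hθad, hθbd, Set.union_empty]
  obtain ⟨c, -, hc⟩ := htot _ _ hθ
  exact hc ▸ c.2

theorem Set.ne_univ_of_notMem {α : Type*} {s : Set α} {x : α} (hx : x ∉ s) : s ≠ Set.univ :=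
  (Set.ne_univ_iff_exists_notMem s).2 ⟨x, hx⟩

/-- the substructure `℘{1,2,3} ∖ {{1,2,3}}` of the powerset of a three-element
set (with disjoint union) has no disjoint-union representation. -/
theorem stmt_6 :
    ¬ ∃ (X : Type) (θ : {S : Set (Fin 3) // S ≠ Set.univ} → Set X),
        Function.Injective θ ∧
        (∀ a b c : {S : Set (Fin 3) // S ≠ Set.univ},
          ((a : Set (Fin 3)) ∩ (b : Set (Fin 3)) = ∅ ∧
              (a : Set (Fin 3)) ∪ (b : Set (Fin 3)) = (c : Set (Fin 3))) ↔
            (θ a ∩ θ b = ∅ ∧ θ a ∪ θ b = θ c)) ∧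
        (∀ a b : {S : Set (Fin 3) // S ≠ Set.univ}, θ a ∩ θ b = ∅ →
          ∃ c : {S : Set (Fin 3) // S ≠ Set.univ},
            (a : Set (Fin 3)) ∩ (b : Set (Fin 3)) = ∅ ∧
              (a : Set (Fin 3)) ∪ (b : Set (Fin 3)) = (c : Set (Fin 3))) := by
  rintro ⟨X, θ, -, hjoin, htot⟩
  have hcover : ({0} ∪ {1} ∪ {2} : Set (Fin 3)) = Set.univ := by
    ext i
    fin_cases i <;> simp
  refine union_union_mem_of_disjoint_rep θ (fun a b c => (hjoin a b c).1) htot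
    (Set.ne_univ_of_notMem (x := 1) (by simp)) (Set.ne_univ_of_notMem (x := 0) (by simp))
    (Set.ne_univ_of_notMem (x := 0) (by simp)) (Set.ne_univ_of_notMem (x := 2) (by simp))
    (Set.ne_univ_of_notMem (x := 1) (by simp)) (Set.ne_univ_of_notMem (x := 0) (by simp))
    (by simp) (by simp) (by simp) hcover
end

section
/- Let A be a countable partial (⊔•)-algebra. If player ∃ has a winning strategy in the ω-length game Γ_ω over A, then A has a disjoint-union representation over a base of size at most 2·|A|². -/
/-- A move of player ∀ in a non-initial round of the game Γ over a partial `(⊔•)`-algebra: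
either pick `a, b` with `a ⊔• b = c ∈ Y` (split), or pick `a ∈ Y` (resp. `b ∈ Y`) and `b`
(resp. `a`) with `a ⊔• b = c` (addL/addR). -/
inductive AMove (A : Type) where
  | split (a b c : A)
  | addL (a b c : A)
  | addR (a b c : A)

/-- Legality of a ∀-move at a position with current set `Y`. -/
def legalMove {A : Type} (op : A → A → Option A) (Y : Finset A) : AMove A → Prop
  | .split a b c => op a b = some c ∧ c ∈ Y
  | .addL a b c => a ∈ Y ∧ op a b = some c
  | .addR a b c => b ∈ Y ∧ op a b = some c

/-- ∃'s response to a ∀-move: at a split she may add `a` or `b` (chosen by `choice`),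
otherwise she must add `a ⊔• b`. -/
def respond {A : Type} [DecidableEq A] (choice : Bool) (Y : Finset A) : AMove A → Finset A
  | .split a b _ => insert (if choice then a else b) Y
  | .addL _ _ c => insert c Y
  | .addR _ _ c => insert c Y

/-- A position `(Y, N)` not yet won by ∀: `Y ∩ N = ∅` and no two elements of `Y`
are combinable. -/
def Good {A : Type} (op : A → A → Option A) (Y N : Finset A) : Prop :=
  (∀ x ∈ Y, x ∉ N) ∧ ∀ a ∈ Y, ∀ b ∈ Y, op a b = none

/-- `Surv op k Y N`: ∃ can survive `k` further rounds of the game from position `(Y, N)`. -/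
def Surv {A : Type} [DecidableEq A] (op : A → A → Option A) :
    ℕ → Finset A → Finset A → Prop
  | 0, Y, N => Good op Y N
  | k + 1, Y, N => Good op Y N ∧
      (∀ a b c, op a b = some c → c ∈ Y →
        Surv op k (insert a Y) N ∨ Surv op k (insert b Y) N) ∧
      (∀ a ∈ Y, ∀ b c, op a b = some c → Surv op k (insert c Y) N) ∧
      (∀ a : A, ∀ b ∈ Y, ∀ c, op a b = some c → Surv op k (insert c Y) N)

/-- ∃ has a winning strategy in the `n`-round game `Γ_n`:
after any initial ∀-move she can choose an initial position from which she survives. -/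
def WinGammaN {A : Type} [DecidableEq A] (op : A → A → Option A) (n : ℕ) : Prop :=
  (∀ a b : A, a ≠ b → Surv op n {a} {b} ∨ Surv op n {b} {a}) ∧
  (∀ a b : A, op a b = none → Surv op n {a, b} ∅)

/-- The sequence of `Y`-components of the positions in a play from `(Y0, N)` in which
∀ plays the moves `m 0, m 1, …` and ∃ follows the strategy `σ`. -/
def playY {A : Type} [DecidableEq A] (σ : Finset A → Finset A → AMove A → Bool)
    (Y0 N : Finset A) (m : ℕ → AMove A) : ℕ → Finset A
  | 0 => Y0
  | k + 1 => respond (σ (playY σ Y0 N m k) N (m k)) (playY σ Y0 N m k) (m k)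

/-- ∃ has a winning strategy in the ω-length game `Γ_ω`: there are choice functions
`σ0` (for the initial round) and `σ` (for later rounds) such that every play, against
any legal sequence of ∀-moves, passes only through good positions. -/
def WinGammaOmega {A : Type} [DecidableEq A] (op : A → A → Option A) : Prop :=
  ∃ (σ0 : A → A → Bool) (σ : Finset A → Finset A → AMove A → Bool),
    (∀ a b : A, a ≠ b → ∀ (m : ℕ → AMove A) (n : ℕ),
      (∀ k < n, legalMove op
          (playY σ (if σ0 a b then {a} else {b}) (if σ0 a b then {b} else {a}) m k) (m k)) →
      Good op (playY σ (if σ0 a b then {a} else {b}) (if σ0 a b then {b} else {a}) m n)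
        (if σ0 a b then {b} else {a})) ∧
    (∀ a b : A, op a b = none → ∀ (m : ℕ → AMove A) (n : ℕ),
      (∀ k < n, legalMove op (playY σ {a, b} ∅ m k) (m k)) →
      Good op (playY σ {a, b} ∅ m n) ∅)

/-!
A set `S ⊆ A` that contains no combinable pair, contains `a` or `b` whenever it contains
`a ⊔• b`, and contains `a ⊔• b` whenever it contains `a` or `b`, behaves like a point of a
representation: `a ↦ {S | a ∈ S}` turns `⊔•` into disjoint union. So it suffices to find, for
every `a ≠ b`, such a set separating them, and for every non-combinable pair, such a set
containing both; `2·|A|²` sets then suffice. These sets come from ∃'s winning strategy: against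
an enumeration of all of ∀'s moves, each repeated infinitely often (possible as `A` is
countable), the union of the positions of the play is such a set.
-/

variable {A : Type}

structure IsSaturated (op : A → A → Option A) (S : Set A) : Prop where
  op_eq_none : ∀ a ∈ S, ∀ b ∈ S, op a b = none
  mem_or_mem_of_op_eq : ∀ a b c, op a b = some c → c ∈ S → a ∈ S ∨ b ∈ S
  mem_of_mem_left : ∀ a b c, a ∈ S → op a b = some c → c ∈ S
  mem_of_mem_right : ∀ a b c, b ∈ S → op a b = some c → c ∈ S

theorem IsSaturated.empty (op : A → A → Option A) : IsSaturated op ∅ where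
  op_eq_none := by simp
  mem_or_mem_of_op_eq := by simp
  mem_of_mem_left := by simp
  mem_of_mem_right := by simp

theorem IsSaturated.mem_iff {op : A → A → Option A} {S : Set A} (hS : IsSaturated op S)
    {a b c : A} (h : op a b = some c) : c ∈ S ↔ a ∈ S ∨ b ∈ S :=
  ⟨hS.mem_or_mem_of_op_eq a b c h,
    fun hab => hab.elim (hS.mem_of_mem_left a b c · h) (hS.mem_of_mem_right a b c · h)⟩

structure IsDisjointUnionRep {X : Type} (op : A → A → Option A) (θ : A → Set X) : Prop where
  injective : Function.Injective θ
  isSome_iff : ∀ a b, (op a b).isSome ↔ θ a ∩ θ b = ∅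
  map_op : ∀ a b c, op a b = some c → θ c = θ a ∪ θ b

theorem isDisjointUnionRep_of_isSaturated {op : A → A → Option A} {ι : Type} (S : ι → Set A)
    (hS : ∀ i, IsSaturated op (S i)) (hsep : ∀ a b, a ≠ b → ∃ i, ¬(a ∈ S i ↔ b ∈ S i))
    (hmeet : ∀ a b, op a b = none → ∃ i, a ∈ S i ∧ b ∈ S i) :
    IsDisjointUnionRep op (fun a => {i | a ∈ S i}) where
  injective a b hab := by
    by_contra hne
    obtain ⟨i, hi⟩ := hsep a b hne
    exact hi (Set.ext_iff.mp hab i)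
  isSome_iff a b := by
    constructor
    · intro hsome
      obtain ⟨c, hc⟩ := Option.isSome_iff_exists.mp hsome
      refine Set.eq_empty_of_forall_notMem fun i ⟨ha, hb⟩ => ?_
      simp [(hS i).op_eq_none a ha b hb] at hc
    · intro hdisj
      by_contra hnone
      obtain ⟨i, hi⟩ := hmeet a b (Option.not_isSome_iff_eq_none.mp hnone)
      exact Set.eq_empty_iff_forall_notMem.mp hdisj i hi
  map_op a b c h := by
    ext i
    exact (hS i).mem_iff h

instance {A : Type} [Countable A] : Countable (AMove A) := by
  have hinj : Function.Injective (fun mv : AMove A => match mv with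
    | .split a b c => ((0 : Fin 3), a, b, c)
    | .addL a b c => ((1 : Fin 3), a, b, c)
    | .addR a b c => ((2 : Fin 3), a, b, c)) := by
    intro x y hxy; cases x <;> cases y <;> simp_all
  exact hinj.countable

instance {A : Type} [Nonempty A] : Nonempty (AMove A) :=
  ⟨.split (Classical.arbitrary A) (Classical.arbitrary A) (Classical.arbitrary A)⟩

theorem exists_seq_forall_exists_le_eq {α : Type} [Countable α] [Nonempty α] :
    ∃ e : ℕ → α, ∀ v n, ∃ k, n ≤ k ∧ e k = v := by
  obtain ⟨f, hf⟩ := exists_surjective_nat α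
  refine ⟨fun k => f k.unpair.2, fun v n => ?_⟩
  obtain ⟨j, rfl⟩ := hf v
  exact ⟨Nat.pair n j, Nat.left_le_pair n j, by simp⟩

theorem legalMove_mono {op : A → A → Option A} {Y Y' : Finset A} (hY : Y ⊆ Y') {v : AMove A}
    (hv : legalMove op Y v) : legalMove op Y' v := by
  cases v with
  | split => exact ⟨hv.1, hY hv.2⟩
  | addL => exact ⟨hY hv.1, hv.2⟩
  | addR => exact ⟨hY hv.1, hv.2⟩

section Game

variable [DecidableEq A] (op : A → A → Option A) (σ : Finset A → Finset A → AMove A → Bool)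
  (Y0 N : Finset A)

theorem subset_respond (ch : Bool) (Y : Finset A) (v : AMove A) : Y ⊆ respond ch Y v := by
  cases v <;> simp [respond, Finset.subset_insert]

theorem mem_respond_split (ch : Bool) (Y : Finset A) (a b c : A) :
    a ∈ respond ch Y (.split a b c) ∨ b ∈ respond ch Y (.split a b c) := by
  cases ch <;> simp [respond]

theorem mem_respond_addL (ch : Bool) (Y : Finset A) (a b c : A) :
    c ∈ respond ch Y (.addL a b c) :=
  Finset.mem_insert_self c Y

theorem mem_respond_addR (ch : Bool) (Y : Finset A) (a b c : A) :
    c ∈ respond ch Y (.addR a b c) :=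
  Finset.mem_insert_self c Y

theorem playY_congr {m m' : ℕ → AMove A} {n : ℕ} (h : ∀ k < n, m k = m' k) :
    playY σ Y0 N m n = playY σ Y0 N m' n := by
  induction n with
  | zero => rfl
  | succ n ih =>
    simp only [playY, ih fun k hk => h k (by omega), h n n.lt_succ_self]

inductive Reachable : Finset A → Prop
  | start : Reachable Y0
  | step {Y : Finset A} {v : AMove A} :
      Reachable Y → legalMove op Y v → Reachable (respond (σ Y N v) Y v)

theorem Reachable.exists_legal_play [Nonempty A] {Y : Finset A} (hY : Reachable op σ Y0 N Y) :
    ∃ (m : ℕ → AMove A) (n : ℕ),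
      (∀ k < n, legalMove op (playY σ Y0 N m k) (m k)) ∧ playY σ Y0 N m n = Y := by
  induction hY with
  | start => exact ⟨fun _ => Classical.arbitrary _, 0, by simp, rfl⟩
  | @step _ v _ hv ih =>
    obtain ⟨m, n, hlegal, rfl⟩ := ih
    have hprefix : ∀ k ≤ n, playY σ Y0 N (Function.update m n v) k = playY σ Y0 N m k :=
      fun k hk => playY_congr σ Y0 N fun j hj => Function.update_of_ne (by omega) _ _
    refine ⟨Function.update m n v, n + 1, fun k hk => ?_, ?_⟩
    · rcases Nat.lt_succ_iff_lt_or_eq.mp hk with hk | rfl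
      · rw [hprefix k hk.le, Function.update_of_ne hk.ne]
        exact hlegal k hk
      · rwa [hprefix k le_rfl, Function.update_self]
    · rw [playY, hprefix n le_rfl, Function.update_self]

open Classical in
noncomputable def exhaustivePlay (e : ℕ → AMove A) : ℕ → Finset A
  | 0 => Y0
  | k + 1 =>
    let Y := exhaustivePlay e k
    if legalMove op Y (e k) then respond (σ Y N (e k)) Y (e k) else Y

variable (e : ℕ → AMove A)

theorem exhaustivePlay_mono : Monotone (exhaustivePlay op σ Y0 N e) := by
  refine monotone_nat_of_le_succ fun n => ?_
  rw [exhaustivePlay]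
  split
  · exact subset_respond _ _ _
  · exact le_rfl

theorem reachable_exhaustivePlay (n : ℕ) :
    Reachable op σ Y0 N (exhaustivePlay op σ Y0 N e n) := by
  induction n with
  | zero => exact .start
  | succ n ih =>
    rw [exhaustivePlay]
    split
    · exact ih.step ‹_›
    · exact ih

theorem exists_exhaustivePlay_succ_eq_respond (he : ∀ v n, ∃ k, n ≤ k ∧ e k = v) {v : AMove A}
    {n : ℕ} (hv : legalMove op (exhaustivePlay op σ Y0 N e n) v) :
    ∃ k, exhaustivePlay op σ Y0 N e (k + 1) =
      respond (σ (exhaustivePlay op σ Y0 N e k) N v) (exhaustivePlay op σ Y0 N e k) v := by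
  obtain ⟨k, hnk, rfl⟩ := he v n
  refine ⟨k, ?_⟩
  rw [exhaustivePlay, if_pos (legalMove_mono (exhaustivePlay_mono op σ Y0 N e hnk) hv)]

theorem isSaturated_iUnion_exhaustivePlay (he : ∀ v n, ∃ k, n ≤ k ∧ e k = v)
    (hgood : ∀ n, Good op (exhaustivePlay op σ Y0 N e n) N) :
    IsSaturated op (⋃ n, (exhaustivePlay op σ Y0 N e n : Set A)) := by
  have hmono := exhaustivePlay_mono op σ Y0 N e
  have hanswer := @exists_exhaustivePlay_succ_eq_respond _ _ op σ Y0 N e he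
  refine ⟨?_, ?_, ?_, ?_⟩ <;> simp only [Set.mem_iUnion, Finset.mem_coe]
  · rintro a ⟨n₁, ha⟩ b ⟨n₂, hb⟩
    exact (hgood (max n₁ n₂)).2 a (hmono (le_max_left _ _) ha) b (hmono (le_max_right _ _) hb)
  · rintro a b c hop ⟨n, hc⟩
    obtain ⟨k, hk⟩ := hanswer (v := .split a b c) ⟨hop, hc⟩
    have hab := mem_respond_split (σ (exhaustivePlay op σ Y0 N e k) N (.split a b c))
      (exhaustivePlay op σ Y0 N e k) a b c
    rw [← hk] at hab
    exact hab.imp (⟨k + 1, ·⟩) (⟨k + 1, ·⟩)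
  · rintro a b c ⟨n, ha⟩ hop
    obtain ⟨k, hk⟩ := hanswer (v := .addL a b c) ⟨ha, hop⟩
    exact ⟨k + 1, by rw [hk]; exact mem_respond_addL ..⟩
  · rintro a b c ⟨n, hb⟩ hop
    obtain ⟨k, hk⟩ := hanswer (v := .addR a b c) ⟨hb, hop⟩
    exact ⟨k + 1, by rw [hk]; exact mem_respond_addR ..⟩

theorem exists_isSaturated_of_forall_good [Countable A] [Nonempty A]
    (hG : ∀ (m : ℕ → AMove A) (n : ℕ), (∀ k < n, legalMove op (playY σ Y0 N m k) (m k)) →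
      Good op (playY σ Y0 N m n) N) :
    ∃ S : Set A, IsSaturated op S ∧ ↑Y0 ⊆ S ∧ ∀ x ∈ S, x ∉ N := by
  obtain ⟨e, he⟩ := exists_seq_forall_exists_le_eq (α := AMove A)
  have hgood (n : ℕ) : Good op (exhaustivePlay op σ Y0 N e n) N := by
    obtain ⟨m, k, hlegal, hplay⟩ := (reachable_exhaustivePlay op σ Y0 N e n).exists_legal_play
    exact hplay ▸ hG m k hlegal
  refine ⟨_, isSaturated_iUnion_exhaustivePlay op σ Y0 N e he hgood,
    Set.subset_iUnion_of_subset 0 subset_rfl, ?_⟩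
  simp only [Set.mem_iUnion, Finset.mem_coe]
  rintro x ⟨n, hx⟩
  exact (hgood n).1 x hx

end Game

/-- if `A` is a countable partial `(⊔•)`-algebra and ∃ has a winning strategy
in the ω-length game `Γ_ω` over `A`, then `A` has a disjoint-union representation over a
base of size at most `2·|A|²`. -/
theorem stmt_9 {A : Type} [DecidableEq A] [Countable A] (op : A → A → Option A)
    (h : WinGammaOmega op) :
    ∃ (X : Type) (θ : A → Set X),
      Function.Injective θ ∧
      (∀ a b, (op a b).isSome ↔ θ a ∩ θ b = ∅) ∧
      (∀ a b c, op a b = some c → θ c = θ a ∪ θ b) ∧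
      Cardinal.mk X ≤ 2 * Cardinal.mk A ^ 2 := by
  obtain ⟨σ0, σ, hdistinct, hnone⟩ := h
  have separate (a b : A) : ∃ S, IsSaturated op S ∧ (a ≠ b → ¬(a ∈ S ↔ b ∈ S)) := by
    by_cases hab : a = b
    · exact ⟨∅, .empty op, absurd hab⟩
    have : Nonempty A := ⟨a⟩
    obtain ⟨S, hS, hY0, hN⟩ := exists_isSaturated_of_forall_good op σ _ _ (hdistinct a b hab)
    refine ⟨S, hS, fun _ => ?_⟩
    by_cases hσ : σ0 a b <;> simp only [hσ, if_true, Bool.false_eq_true, if_false,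
      Finset.coe_singleton, Set.singleton_subset_iff, Finset.mem_singleton] at hY0 hN
    · exact fun h => hN b (h.mp hY0) rfl
    · exact fun h => hN a (h.mpr hY0) rfl
  have meet (a b : A) : ∃ S, IsSaturated op S ∧ (op a b = none → a ∈ S ∧ b ∈ S) := by
    by_cases hab : op a b = none
    · have : Nonempty A := ⟨a⟩
      obtain ⟨S, hS, hY0, -⟩ := exists_isSaturated_of_forall_good op σ _ _ (hnone a b hab)
      exact ⟨S, hS, fun _ => ⟨hY0 (by simp), hY0 (by simp)⟩⟩
    · exact ⟨∅, .empty op, (absurd · hab)⟩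
  choose S₁ hS₁ using separate
  choose S₂ hS₂ using meet
  have hrep :=
    isDisjointUnionRep_of_isSaturated (Sum.elim (Function.uncurry S₁) (Function.uncurry S₂))
    (by rintro (⟨a, b⟩ | ⟨a, b⟩); exacts [(hS₁ a b).1, (hS₂ a b).1])
    (fun a b hab => ⟨.inl (a, b), (hS₁ a b).2 hab⟩) (fun a b hab => ⟨.inr (a, b), (hS₂ a b).2 hab⟩)
  refine ⟨_, _, hrep.injective, hrep.isSome_iff, hrep.map_op, ?_⟩
  simp [Cardinal.mk_prod, two_mul, sq]
end

section
/- Let m, n be sets each of cardinality greater than two, and let X(m,n) be the partial algebra of axial subsets of m × n with S ⊔• T = S ∪ T defined when S ∩ T = ∅ and S ∪ T is axial, with constant 0 = ∅. Then X(m,n) has a (∪•, ∅)-representation by sets. -/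
/-!
Represent an axial set `S` by `S` itself together with every pair of non-aligned points
(points sharing neither a row nor a column) that meets `S`. This assignment commutes with
all unions. The point part detects `S ∩ T ≠ ∅`. The pair part detects a point of `S` that
is not aligned with a point of `T`, and for disjoint axial `S`, `T` such a pair exists
exactly when `S ∪ T` is not axial, since a nonempty set is axial iff its points are
pairwise aligned.
-/

/-- A subset of `m × n` is axial if it is of the form `{i} × J` or `I × {j}`. -/
def Axial {m n : Type} (S : Set (m × n)) : Prop :=
  (∃ (i : m) (J : Set n), S = {i} ×ˢ J) ∨ (∃ (I : Set m) (j : n), S = I ×ˢ {j})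

section

variable {m n : Type}

def Aligned (p q : m × n) : Prop :=
  p.1 = q.1 ∨ p.2 = q.2

theorem Aligned.symm {p q : m × n} (h : Aligned p q) : Aligned q p :=
  h.imp Eq.symm Eq.symm

theorem Axial.aligned {S : Set (m × n)} (hS : Axial S) {p q : m × n}
    (hp : p ∈ S) (hq : q ∈ S) : Aligned p q := by
  rcases hS with ⟨i, J, rfl⟩ | ⟨I, j, rfl⟩
  · exact Or.inl (hp.1.trans hq.1.symm)
  · exact Or.inr (hp.2.trans hq.2.symm)

theorem Axial.of_aligned {S : Set (m × n)} {p : m × n} (hp : p ∈ S)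
    (h : ∀ q ∈ S, ∀ r ∈ S, Aligned q r) : Axial S := by
  by_cases hrow : ∀ q ∈ S, q.1 = p.1
  · refine Or.inl ⟨p.1, Prod.snd '' S,
      Set.ext fun q => ⟨fun hq => ⟨hrow q hq, q, hq, rfl⟩, ?_⟩⟩
    rintro ⟨hq1, r, hr, hr2⟩
    have hr1 : r.1 = q.1 := (hrow r hr).trans hq1.symm
    rwa [← Prod.ext hr1 hr2]
  · obtain ⟨q, hq, hqp⟩ := not_forall₂.mp hrow
    have hqp2 : q.2 = p.2 := (h q hq p hp).resolve_left hqp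
    -- a point of `S` off column `p.2` would share the row of `p`, hence be unaligned with `q`
    have hcol : ∀ r ∈ S, r.2 = p.2 := by
      intro r hr
      by_contra hrp
      have hr1 : r.1 = p.1 := (h r hr p hp).resolve_right hrp
      rcases h r hr q hq with h1 | h2
      · exact hqp (h1.symm.trans hr1)
      · exact hrp (h2.trans hqp2)
    refine Or.inr ⟨Prod.fst '' S, p.2,
      Set.ext fun r => ⟨fun hr => ⟨⟨r, hr, rfl⟩, hcol r hr⟩, ?_⟩⟩
    rintro ⟨⟨s, hs, hs1⟩, hr2⟩
    have hs2 : s.2 = r.2 := (hcol s hs).trans hr2.symm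
    rwa [← Prod.ext hs1 hs2]

theorem Axial.union {a b : Set (m × n)} (ha : Axial a) (hb : Axial b)
    (h : ∀ p ∈ a, ∀ q ∈ b, Aligned p q) : Axial (a ∪ b) := by
  rcases (a ∪ b).eq_empty_or_nonempty with h0 | ⟨p, hp⟩
  · rw [Set.union_empty_iff] at h0
    rwa [h0.2, Set.union_empty]
  · refine Axial.of_aligned hp ?_
    rintro q (hq | hq) r (hr | hr)
    exacts [ha.aligned hq hr, h q hq r hr, (h r hr q hq).symm, hb.aligned hq hr]

theorem Axial.union_iff {a b : Set (m × n)} (ha : Axial a) (hb : Axial b) :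
    Axial (a ∪ b) ↔ ∀ p ∈ a, ∀ q ∈ b, Aligned p q :=
  ⟨fun hab _ hp _ hq => hab.aligned (Or.inl hp) (Or.inr hq), ha.union hb⟩

def axialRep (S : Set (m × n)) : Set ((m × n) ⊕ (m × n) × (m × n)) :=
  {x | Sum.elim (· ∈ S) (fun q => (q.1 ∈ S ∨ q.2 ∈ S) ∧ ¬Aligned q.1 q.2) x}

@[simp]
theorem mem_axialRep_inl {S : Set (m × n)} {p : m × n} : Sum.inl p ∈ axialRep S ↔ p ∈ S :=
  Iff.rfl

@[simp]
theorem mem_axialRep_inr {S : Set (m × n)} {q : (m × n) × (m × n)} :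
    Sum.inr q ∈ axialRep S ↔ (q.1 ∈ S ∨ q.2 ∈ S) ∧ ¬Aligned q.1 q.2 :=
  Iff.rfl

theorem axialRep_injective : Function.Injective (axialRep (m := m) (n := n)) :=
  fun a b hab => Set.ext fun p => by
    rw [← mem_axialRep_inl, hab, mem_axialRep_inl]

@[simp]
theorem axialRep_empty : axialRep (∅ : Set (m × n)) = ∅ := by
  ext (p | q) <;> simp

theorem axialRep_union (a b : Set (m × n)) :
    axialRep (a ∪ b) = axialRep a ∪ axialRep b := by
  ext (p | q)
  · simp
  · simp only [Set.mem_union, mem_axialRep_inr]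
    tauto

theorem disjoint_axialRep_iff {a b : Set (m × n)} :
    Disjoint (axialRep a) (axialRep b) ↔
      Disjoint a b ∧ ∀ p ∈ a, ∀ q ∈ b, Aligned p q := by
  simp only [Set.disjoint_left, Sum.forall, mem_axialRep_inl, mem_axialRep_inr]
  constructor
  · rintro ⟨hpt, hpair⟩
    refine ⟨hpt, fun p hp q hq => ?_⟩
    by_contra hpq
    exact hpair (p, q) ⟨Or.inl hp, hpq⟩ ⟨Or.inr hq, hpq⟩
  · rintro ⟨hpt, haligned⟩
    refine ⟨hpt, fun q ⟨hpa, hpq⟩ ⟨hpb, _⟩ => hpq ?_⟩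
    rcases hpa with hpa | hqa <;> rcases hpb with hpb | hqb
    exacts [(hpt _ hpa hpb).elim, haligned _ hpa _ hqb, (haligned _ hqa _ hpb).symm,
      (hpt _ hqa hqb).elim]

end

theorem stmt_10_general {m n : Type} :
    ∃ (X : Type) (θ : {S : Set (m × n) // Axial S} → Set X),
      Function.Injective θ ∧
      (∀ z : {S : Set (m × n) // Axial S}, (z : Set (m × n)) = ∅ → θ z = ∅) ∧
      (∀ a b : {S : Set (m × n) // Axial S},
        (((a : Set (m × n)) ∩ (b : Set (m × n)) = ∅ ∧
            Axial ((a : Set (m × n)) ∪ (b : Set (m × n)))) ↔ θ a ∩ θ b = ∅)) ∧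
      (∀ a b : {S : Set (m × n) // Axial S},
        ∀ hd : (a : Set (m × n)) ∩ (b : Set (m × n)) = ∅,
        ∀ hax : Axial ((a : Set (m × n)) ∪ (b : Set (m × n))),
          θ ⟨(a : Set (m × n)) ∪ (b : Set (m × n)), hax⟩ = θ a ∪ θ b) := by
  refine ⟨_, fun z => axialRep (z : Set (m × n)), axialRep_injective.comp Subtype.val_injective,
    fun z hz => (congrArg axialRep hz).trans axialRep_empty, fun a b => ?_,
    fun a b _ _ => axialRep_union a.1 b.1⟩
  rw [← Set.disjoint_iff_inter_eq_empty, ← Set.disjoint_iff_inter_eq_empty,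
    disjoint_axialRep_iff, a.2.union_iff b.2]

/-- for `m, n` of cardinality greater than two, the partial algebra
`X(m,n)` of axial subsets of `m × n` (with `S ⊔• T = S ∪ T` defined when `S ∩ T = ∅`
and `S ∪ T` is axial, and `0 = ∅`) has a `(∪•, ∅)`-representation by sets. -/
theorem stmt_10 {m n : Type} (hm : 2 < Cardinal.mk m) (hn : 2 < Cardinal.mk n) :
    ∃ (X : Type) (θ : {S : Set (m × n) // Axial S} → Set X),
      Function.Injective θ ∧
      (∀ z : {S : Set (m × n) // Axial S}, (z : Set (m × n)) = ∅ → θ z = ∅) ∧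
      (∀ a b : {S : Set (m × n) // Axial S},
        (((a : Set (m × n)) ∩ (b : Set (m × n)) = ∅ ∧
            Axial ((a : Set (m × n)) ∪ (b : Set (m × n)))) ↔ θ a ∩ θ b = ∅)) ∧
      (∀ a b : {S : Set (m × n) // Axial S},
        ∀ hd : (a : Set (m × n)) ∩ (b : Set (m × n)) = ∅,
        ∀ hax : Axial ((a : Set (m × n)) ∪ (b : Set (m × n))),
          θ ⟨(a : Set (m × n)) ∪ (b : Set (m × n)), hax⟩ = θ a ∪ θ b) :=
  stmt_10_general
end

section
/- Let m, n be sets of cardinality greater than two and let ∼ be the smallest equivalence relation on the axial subsets of m × n with {i} × n ∼ m × {j} and {i} × (n∖{j}) ∼ (m∖{i}) × {j} for all i ∈ m, j ∈ n. Then ∼ is a partial-algebra congruence on X(m,n): if S ∼ S′ and S ∩ T = ∅ with S ∪ T axial, then S′ ∩ T = ∅, S′ ∪ T is axial, and S ∪ T ∼ S′ ∪ T. -/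
/-- The generating relation for `∼`: `{i} × n ∼ m × {j}` and
`{i} × (n∖{j}) ∼ (m∖{i}) × {j}`. -/
def genRel {m n : Type} (S S' : Set (m × n)) : Prop :=
  (∃ (i : m) (j : n), S = {i} ×ˢ (Set.univ : Set n) ∧ S' = (Set.univ : Set m) ×ˢ {j}) ∨
  (∃ (i : m) (j : n), S = {i} ×ˢ ({j}ᶜ : Set n) ∧ S' = ({i}ᶜ : Set m) ×ˢ {j})

/-!
Having the same definedness under `· ⊔• T` with `∼`-related results is itself an equivalence
relation, so it suffices to check it on the generating pairs. An axial set containing two points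
of a row lies in that row. Hence if a full row (or column) `S` is disjoint from `T` with `S ∪ T`
axial, then `T = ∅`; and since `|n| > 2`, a punctured row `{i} × (n ∖ {j})` has two points, so
`T ⊆ {(i, j)}`, and adding `(i, j)` turns the punctured row and the punctured column into the
full row and the full column.
-/

open Set
open scoped Cardinal

namespace Relation.EqvGen

variable {α : Type*} {r : α → α → Prop}

theorem defined_iff_and_eqvGen_of_rel (D : α → Prop) (f : α → α)
    (hr : ∀ a b, r a b → (D a ↔ D b) ∧ (D a → EqvGen r (f a) (f b)))
    {a b : α} (hab : EqvGen r a b) : (D a ↔ D b) ∧ (D a → EqvGen r (f a) (f b)) := by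
  induction hab with
  | rel a b h => exact hr a b h
  | refl a => exact ⟨Iff.rfl, fun _ => .refl _⟩
  | symm a b _ ih => exact ⟨ih.1.symm, fun hb => (ih.2 (ih.1.mpr hb)).symm⟩
  | trans a b c _ _ ihab ihbc =>
    exact ⟨ihab.1.trans ihbc.1, fun ha => (ihab.2 ha).trans _ _ _ (ihbc.2 (ihab.1.mp ha))⟩

end Relation.EqvGen

theorem Cardinal.exists_ne_ne_of_two_lt {α : Type*} (h : 2 < #α) (x y : α) :
    ∃ z : α, z ≠ x ∧ z ≠ y :=
  exists_ne_ne_of_three_le (by exact_mod_cast Order.succ_le_of_lt h) x y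

theorem Cardinal.nontrivial_of_two_lt {α : Type*} (h : 2 < #α) : Nontrivial α :=
  one_lt_iff_nontrivial.mp (Cardinal.one_lt_two.trans h)

section Axial

variable {m n : Type}

theorem Axial.subset_row {U : Set (m × n)} (hU : Axial U) {i : m} {b c : n}
    (hb : (i, b) ∈ U) (hc : (i, c) ∈ U) (hbc : b ≠ c) : U ⊆ {i} ×ˢ univ := by
  rcases hU with ⟨i', J, rfl⟩ | ⟨I, j, rfl⟩
  · obtain rfl : i = i' := hb.1
    exact prod_mono subset_rfl (subset_univ J)
  · exact absurd (hb.2.trans hc.2.symm) hbc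

theorem Axial.subset_col {U : Set (m × n)} (hU : Axial U) {j : n} {a b : m}
    (ha : (a, j) ∈ U) (hb : (b, j) ∈ U) (hab : a ≠ b) : U ⊆ univ ×ˢ {j} := by
  rcases hU with ⟨i, J, rfl⟩ | ⟨I, j', rfl⟩
  · exact absurd (ha.1.trans hb.1.symm) hab
  · obtain rfl : j = j' := ha.2
    exact prod_mono (subset_univ I) subset_rfl

theorem puncturedRow_union_singleton (i : m) (j : n) :
    {i} ×ˢ {j}ᶜ ∪ {(i, j)} = {i} ×ˢ (univ : Set n) := by
  ext ⟨a, b⟩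
  by_cases b = j <;> simp [*]

theorem puncturedCol_union_singleton (i : m) (j : n) :
    {i}ᶜ ×ˢ {j} ∪ {(i, j)} = (univ : Set m) ×ˢ {j} := by
  ext ⟨a, b⟩
  by_cases a = i <;> simp [*]

/-- `S ⊔• T` is defined. -/
def JoinDefined (S T : Set (m × n)) : Prop :=
  S ∩ T = ∅ ∧ Axial (S ∪ T)

theorem joinDefined_empty {S : Set (m × n)} (hS : Axial S) : JoinDefined S ∅ :=
  ⟨inter_empty S, by rwa [union_empty]⟩

theorem joinDefined_row_iff [Nontrivial n] (i : m) (T : Set (m × n)) :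
    JoinDefined ({i} ×ˢ univ) T ↔ T = ∅ := by
  refine ⟨fun ⟨hd, hax⟩ => ?_, fun hT => hT ▸ joinDefined_empty (.inl ⟨i, univ, rfl⟩)⟩
  obtain ⟨b, c, hbc⟩ := exists_pair_ne n
  have hrow := hax.subset_row (Or.inl ⟨rfl, trivial⟩) (Or.inl ⟨rfl, trivial⟩) hbc
  exact eq_empty_of_subset_empty (hd ▸ subset_inter (subset_union_right.trans hrow) subset_rfl)

theorem joinDefined_col_iff [Nontrivial m] (j : n) (T : Set (m × n)) :
    JoinDefined (univ ×ˢ {j}) T ↔ T = ∅ := by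
  refine ⟨fun ⟨hd, hax⟩ => ?_, fun hT => hT ▸ joinDefined_empty (.inr ⟨univ, j, rfl⟩)⟩
  obtain ⟨a, b, hab⟩ := exists_pair_ne m
  have hcol := hax.subset_col (Or.inl ⟨trivial, rfl⟩) (Or.inl ⟨trivial, rfl⟩) hab
  exact eq_empty_of_subset_empty (hd ▸ subset_inter (subset_union_right.trans hcol) subset_rfl)

theorem joinDefined_puncturedRow_iff (hn : 2 < #n) (i : m) (j : n) (T : Set (m × n)) :
    JoinDefined ({i} ×ˢ {j}ᶜ) T ↔ T = ∅ ∨ T = {(i, j)} := by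
  rw [← subset_singleton_iff_eq]
  constructor
  · rintro ⟨hd, hax⟩ ⟨a, b⟩ hT
    have := Cardinal.nontrivial_of_two_lt hn
    obtain ⟨c, hcj⟩ := exists_ne j
    obtain ⟨d, hdj, hdc⟩ := Cardinal.exists_ne_ne_of_two_lt hn j c
    have hrow := hax.subset_row (Or.inl ⟨rfl, hcj⟩) (Or.inl ⟨rfl, hdj⟩) hdc.symm
    obtain rfl : a = i := (hrow (Or.inr hT)).1
    by_contra hb
    exact (hd ▸ ⟨⟨rfl, fun h => hb (h ▸ rfl)⟩, hT⟩ : (a, b) ∈ (∅ : Set (m × n)))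
  · intro hT
    rcases subset_singleton_iff_eq.mp hT with rfl | rfl
    · exact joinDefined_empty (.inl ⟨i, _, rfl⟩)
    · refine ⟨eq_empty_of_forall_notMem fun x ⟨hx, hxT⟩ => ?_, ?_⟩
      · exact hx.2 (congrArg Prod.snd hxT)
      · rw [puncturedRow_union_singleton]
        exact .inl ⟨i, univ, rfl⟩

theorem joinDefined_puncturedCol_iff (hm : 2 < #m) (i : m) (j : n) (T : Set (m × n)) :
    JoinDefined ({i}ᶜ ×ˢ {j}) T ↔ T = ∅ ∨ T = {(i, j)} := by
  rw [← subset_singleton_iff_eq]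
  constructor
  · rintro ⟨hd, hax⟩ ⟨a, b⟩ hT
    have := Cardinal.nontrivial_of_two_lt hm
    obtain ⟨c, hci⟩ := exists_ne i
    obtain ⟨d, hdi, hdc⟩ := Cardinal.exists_ne_ne_of_two_lt hm i c
    have hcol := hax.subset_col (Or.inl ⟨hci, rfl⟩) (Or.inl ⟨hdi, rfl⟩) hdc.symm
    obtain rfl : b = j := (hcol (Or.inr hT)).2
    by_contra ha
    exact (hd ▸ ⟨⟨fun h => ha (h ▸ rfl), rfl⟩, hT⟩ : (a, b) ∈ (∅ : Set (m × n)))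
  · intro hT
    rcases subset_singleton_iff_eq.mp hT with rfl | rfl
    · exact joinDefined_empty (.inr ⟨_, j, rfl⟩)
    · refine ⟨eq_empty_of_forall_notMem fun x ⟨hx, hxT⟩ => ?_, ?_⟩
      · exact hx.1 (congrArg Prod.fst hxT)
      · rw [puncturedCol_union_singleton]
        exact .inr ⟨univ, j, rfl⟩

theorem genRel.joinDefined_iff_and_eqvGen (hm : 2 < #m) (hn : 2 < #n) {S S' : Set (m × n)}
    (h : genRel S S') (T : Set (m × n)) :
    (JoinDefined S T ↔ JoinDefined S' T) ∧
      (JoinDefined S T → Relation.EqvGen genRel (S ∪ T) (S' ∪ T)) := by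
  have := Cardinal.nontrivial_of_two_lt hm
  have := Cardinal.nontrivial_of_two_lt hn
  rcases h with ⟨i, j, rfl, rfl⟩ | ⟨i, j, rfl, rfl⟩
  · rw [joinDefined_row_iff, joinDefined_col_iff]
    refine ⟨Iff.rfl, ?_⟩
    rintro rfl
    simp only [union_empty]
    exact .rel _ _ (.inl ⟨i, j, rfl, rfl⟩)
  · rw [joinDefined_puncturedRow_iff hn, joinDefined_puncturedCol_iff hm]
    refine ⟨Iff.rfl, ?_⟩
    rintro (rfl | rfl)
    · simp only [union_empty]
      exact .rel _ _ (.inr ⟨i, j, rfl, rfl⟩)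
    · rw [puncturedRow_union_singleton, puncturedCol_union_singleton]
      exact .rel _ _ (.inl ⟨i, j, rfl, rfl⟩)

end Axial

theorem stmt_11_general {m n : Type} (hm : 2 < Cardinal.mk m) (hn : 2 < Cardinal.mk n)
    (S S' T : Set (m × n))
    (heqv : Relation.EqvGen genRel S S')
    (hd : S ∩ T = ∅) (hax : Axial (S ∪ T)) :
    S' ∩ T = ∅ ∧ Axial (S' ∪ T) ∧ Relation.EqvGen genRel (S ∪ T) (S' ∪ T) := by
  have hcongr := heqv.defined_iff_and_eqvGen_of_rel (JoinDefined · T) (· ∪ T)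
    fun _ _ h => h.joinDefined_iff_and_eqvGen hm hn T
  obtain ⟨hd', hax'⟩ := hcongr.1.mp ⟨hd, hax⟩
  exact ⟨hd', hax', hcongr.2 ⟨hd, hax⟩⟩

/-- for `m, n` of cardinality greater than two, the smallest equivalence
relation `∼` generated by `genRel` is a partial-algebra congruence on `X(m,n)`:
if `S ∼ S'`, `S ∩ T = ∅` and `S ∪ T` is axial, then `S' ∩ T = ∅`, `S' ∪ T` is axial,
and `S ∪ T ∼ S' ∪ T`. -/
theorem stmt_11 {m n : Type} (hm : 2 < Cardinal.mk m) (hn : 2 < Cardinal.mk n)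
    (S S' T : Set (m × n)) (hS : Axial S) (hS' : Axial S') (hT : Axial T)
    (heqv : Relation.EqvGen genRel S S')
    (hd : S ∩ T = ∅) (hax : Axial (S ∪ T)) :
    S' ∩ T = ∅ ∧ Axial (S' ∪ T) ∧ Relation.EqvGen genRel (S ∪ T) (S' ∪ T) :=
  stmt_11_general hm hn S S' T heqv hd hax
end

section
/- Let m, n have cardinality greater than two. If the quotient partial algebra A(m,n) has a ≲-complete (∪•, ∅)-representation, then |m| = |n|. Specifically, from a point x in the representation of the top element 1, the relation R = {(i,j) : x ∈ θ([{(i,j)}])} is a bijection between m and n. -/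
/-- The congruence `∼`. -/
def eqv {m n : Type} (S S' : Set (m × n)) : Prop := Relation.EqvGen genRel S S'

/-- `[S] ⊔• [T]` is defined in the quotient `A(m,n)`, expressed via representatives. -/
def qDefined {m n : Type} (S T : Set (m × n)) : Prop :=
  ∃ S' T', Axial S' ∧ Axial T' ∧ eqv S S' ∧ eqv T T' ∧ S' ∩ T' = ∅ ∧ Axial (S' ∪ T')

/-- The order `≲` on the quotient `A(m,n)`, expressed via representatives. -/
def qLesim {m n : Type} (S T : Set (m × n)) : Prop :=
  eqv S T ∨ ∃ S' C, Axial S' ∧ Axial C ∧ eqv S S' ∧ S' ∩ C = ∅ ∧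
    Axial (S' ∪ C) ∧ eqv (S' ∪ C) T

/-!
A point `x` of `θ 1` lies in `θ {(i, j)}` for exactly one `j` in each row `i`, and for exactly one
`i` in each column `j`. Indeed `1` is the `≲`-supremum of the singletons of any row or column, so
`≲`-completeness makes `θ 1` the union of their images, and distinct singletons on a common line are
combinable, so their images are disjoint.

The supremum claim is where `|m|, |n| > 2` enters: then singletons form trivial classes, and the
class of an axial set not `∼ 1` is either the set alone or an arm pair
`{i} × (n ∖ {j}) ∼ (m ∖ {i}) × {j}`, whose union misses a point of every row and every column.
Hence an axial upper bound of the singletons of a line is `∼ 1`.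
-/

open Set

theorem Set.nontrivial_compl_singleton {α : Type*} (h : 2 < Cardinal.mk α) (a : α) :
    ({a}ᶜ : Set α).Nontrivial := by
  have h3 : 3 ≤ Cardinal.mk α := by exact_mod_cast Cardinal.natCast_add_one_le_iff.2 h
  obtain ⟨b, hb, -⟩ := Cardinal.exists_ne_ne_of_three_le h3 a a
  obtain ⟨c, hca, hcb⟩ := Cardinal.exists_ne_ne_of_three_le h3 a b
  exact ⟨b, hb, c, hca, hcb.symm⟩

theorem nonempty_equiv_of_existsUnique {α β : Sort*} {r : α → β → Prop}
    (h₁ : ∀ a, ∃! b, r a b) (h₂ : ∀ b, ∃! a, r a b) : Nonempty (α ≃ β) := by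
  choose f hf hfu using h₁
  refine ⟨Equiv.ofBijective f ⟨fun a a' haa' => ?_, fun b => ?_⟩⟩
  · exact (h₂ (f a)).unique (hf a) (haa' ▸ hf a')
  · obtain ⟨a, ha, -⟩ := h₂ b
    exact ⟨a, (hfu a b ha).symm⟩

variable {m n : Type}

def rowArm (i : m) (j : n) : Set (m × n) := {i} ×ˢ {j}ᶜ

def colArm (i : m) (j : n) : Set (m × n) := {i}ᶜ ×ˢ {j}

/-- The representatives of the class `1`. -/
def IsLine (S : Set (m × n)) : Prop :=
  (∃ i, S = {i} ×ˢ univ) ∨ ∃ j, S = univ ×ˢ {j}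

theorem axial_of_subset_line {L S : Set (m × n)} (hL : IsLine L) (hS : S ⊆ L) : Axial S := by
  rcases hL with ⟨i, rfl⟩ | ⟨j, rfl⟩
  · refine Or.inl ⟨i, {j | (i, j) ∈ S}, ext fun ⟨a, b⟩ => ⟨fun h => ?_, fun ⟨ha, hb⟩ => ?_⟩⟩
    · obtain rfl : a = i := (hS h).1
      exact ⟨rfl, h⟩
    · obtain rfl : a = i := ha
      exact hb
  · refine Or.inr ⟨{i | (i, j) ∈ S}, j, ext fun ⟨a, b⟩ => ⟨fun h => ?_, fun ⟨ha, hb⟩ => ?_⟩⟩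
    · obtain rfl : b = j := (hS h).2
      exact ⟨h, rfl⟩
    · obtain rfl : b = j := hb
      exact ha

theorem IsLine.axial {L : Set (m × n)} (hL : IsLine L) : Axial L :=
  axial_of_subset_line hL subset_rfl

theorem eqv_of_isLine [Nonempty m] [Nonempty n] {S T : Set (m × n)} (hS : IsLine S)
    (hT : IsLine T) : eqv S T := by
  obtain ⟨i₀⟩ := ‹Nonempty m›
  obtain ⟨j₀⟩ := ‹Nonempty n›
  have key : ∀ U : Set (m × n), IsLine U → eqv U (univ ×ˢ {j₀}) := by
    rintro U (⟨i, rfl⟩ | ⟨j, rfl⟩)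
    · exact .rel _ _ (Or.inl ⟨i, j₀, rfl, rfl⟩)
    · exact .trans _ _ _ (.symm _ _ (.rel _ _ (Or.inl ⟨i₀, j, rfl, rfl⟩)))
        (.rel _ _ (Or.inl ⟨i₀, j₀, rfl, rfl⟩))
  exact .trans _ _ _ (key S hS) (.symm _ _ (key T hT))

theorem genRel_cases {S T : Set (m × n)} (h : genRel S T) :
    (IsLine S ∧ IsLine T) ∨ ∃ i j, S = rowArm i j ∧ T = colArm i j := by
  rcases h with ⟨i, j, rfl, rfl⟩ | h
  · exact Or.inl ⟨Or.inl ⟨i, rfl⟩, Or.inr ⟨j, rfl⟩⟩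
  · exact Or.inr h

theorem apply_eq_of_eqv {β : Sort*} (f : Set (m × n) → β)
    (hf : ∀ S T, genRel S T → f S = f T) {S T : Set (m × n)} (h : eqv S T) : f S = f T :=
  congrArg (Quot.lift f hf) (Quot.eqvGen_sound h)

theorem qDefined_singleton {L : Set (m × n)} (hL : IsLine L) {p q : m × n} (hp : p ∈ L)
    (hq : q ∈ L) (hpq : p ≠ q) : qDefined {p} {q} :=
  ⟨{p}, {q}, axial_of_subset_line hL (singleton_subset_iff.2 hp),
    axial_of_subset_line hL (singleton_subset_iff.2 hq), .refl _, .refl _,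
    singleton_inter_eq_empty.2 hpq, axial_of_subset_line hL (union_subset
      (singleton_subset_iff.2 hp) (singleton_subset_iff.2 hq))⟩

theorem qLesim_singleton_of_mem {L : Set (m × n)} (hL : IsLine L) {p : m × n} (hp : p ∈ L) :
    qLesim {p} L := by
  have hunion : {p} ∪ L \ {p} = L := union_sdiff_cancel (singleton_subset_iff.2 hp)
  refine Or.inr ⟨{p}, L \ {p}, axial_of_subset_line hL (singleton_subset_iff.2 hp),
    axial_of_subset_line hL sdiff_subset, .refl _, inter_sdiff_self _ _, ?_, ?_⟩
  · rw [hunion]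
    exact hL.axial
  · rw [hunion]
    exact .refl _

theorem nontrivial_rowArm (hn : 2 < Cardinal.mk n) (i : m) (j : n) : (rowArm i j).Nontrivial := by
  obtain ⟨a, ha, b, hb, hab⟩ := nontrivial_compl_singleton hn j
  exact ⟨(i, a), ⟨rfl, ha⟩, (i, b), ⟨rfl, hb⟩, fun h => hab (congrArg Prod.snd h)⟩

theorem nontrivial_colArm (hm : 2 < Cardinal.mk m) (i : m) (j : n) : (colArm i j).Nontrivial := by
  obtain ⟨a, ha, b, hb, hab⟩ := nontrivial_compl_singleton hm i
  exact ⟨(a, j), ⟨ha, rfl⟩, (b, j), ⟨hb, rfl⟩, fun h => hab (congrArg Prod.fst h)⟩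

/-- For `|m|, |n| > 2`, the union of the `∼`-class of `S` (all of `m × n` when `S ∼ 1`). -/
def classUnion (S : Set (m × n)) : Set (m × n) :=
  {x | IsLine S ∨ x ∈ S ∨
    ∃ i j, (S = rowArm i j ∨ S = colArm i j) ∧ (x ∈ rowArm i j ∨ x ∈ colArm i j)}

theorem subset_classUnion (S : Set (m × n)) : S ⊆ classUnion S :=
  fun _ hx => Or.inr (Or.inl hx)

theorem classUnion_of_isLine {S : Set (m × n)} (hS : IsLine S) : classUnion S = univ :=
  eq_univ_of_forall fun _ => Or.inl hS

theorem classUnion_of_not_arm {S : Set (m × n)} (hS : ¬ IsLine S)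
    (harm : ∀ i j, S ≠ rowArm i j ∧ S ≠ colArm i j) : classUnion S = S := by
  ext x
  simp [classUnion, hS, harm]

section Nontrivial

variable [Nontrivial m] [Nontrivial n]

omit [Nontrivial m] in
theorem rowArm_inj {i i' : m} {j j' : n} : rowArm i j = rowArm i' j' ↔ i = i' ∧ j = j' := by
  simp [rowArm, prod_eq_prod_iff]

omit [Nontrivial n] in
theorem colArm_inj {i i' : m} {j j' : n} : colArm i j = colArm i' j' ↔ i = i' ∧ j = j' := by
  simp [colArm, prod_eq_prod_iff]

theorem rowArm_ne_colArm (hm : 2 < Cardinal.mk m) (i i' : m) (j j' : n) :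
    rowArm i j ≠ colArm i' j' := by
  intro h
  simp [rowArm, colArm, prod_eq_prod_iff] at h
  exact (nontrivial_compl_singleton hm i').ne_singleton h.1.symm

theorem not_isLine_rowArm (i : m) (j : n) : ¬ IsLine (rowArm i j) := by
  simp [IsLine, rowArm, prod_eq_prod_iff]

theorem not_isLine_colArm (i : m) (j : n) : ¬ IsLine (colArm i j) := by
  simp [IsLine, colArm, prod_eq_prod_iff]

theorem IsLine.nontrivial {L : Set (m × n)} (hL : IsLine L) : L.Nontrivial := by
  rcases hL with ⟨i, rfl⟩ | ⟨j, rfl⟩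
  · obtain ⟨a, b, hab⟩ := exists_pair_ne n
    exact ⟨(i, a), ⟨rfl, trivial⟩, (i, b), ⟨rfl, trivial⟩, fun h => hab (congrArg Prod.snd h)⟩
  · obtain ⟨a, b, hab⟩ := exists_pair_ne m
    exact ⟨(a, j), ⟨trivial, rfl⟩, (b, j), ⟨trivial, rfl⟩, fun h => hab (congrArg Prod.fst h)⟩

theorem eq_singleton_of_eqv (hm : 2 < Cardinal.mk m) (hn : 2 < Cardinal.mk n) {p : m × n}
    {T : Set (m × n)} (h : eqv {p} T) : T = {p} := by
  have hgen : ∀ S T : Set (m × n), genRel S T → S.Nontrivial ∧ T.Nontrivial := by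
    intro S T hST
    rcases genRel_cases hST with ⟨hS, hT⟩ | ⟨i, j, rfl, rfl⟩
    · exact ⟨hS.nontrivial, hT.nontrivial⟩
    · exact ⟨nontrivial_rowArm hn i j, nontrivial_colArm hm i j⟩
  refine cast (apply_eq_of_eqv (· = {p}) (fun S T hST => ?_) h) rfl
  simp [(hgen S T hST).1.ne_singleton, (hgen S T hST).2.ne_singleton]

theorem classUnion_rowArm (hm : 2 < Cardinal.mk m) (i : m) (j : n) :
    classUnion (rowArm i j) = rowArm i j ∪ colArm i j := by
  ext x
  simp [classUnion, not_isLine_rowArm, rowArm_inj, rowArm_ne_colArm hm]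

theorem classUnion_colArm (hm : 2 < Cardinal.mk m) (i : m) (j : n) :
    classUnion (colArm i j) = rowArm i j ∪ colArm i j := by
  ext x
  simp [classUnion, not_isLine_colArm, colArm_inj, (rowArm_ne_colArm hm _ _ _ _).symm]
  tauto

theorem classUnion_eq_of_eqv (hm : 2 < Cardinal.mk m) {S T : Set (m × n)} (h : eqv S T) :
    classUnion S = classUnion T := by
  refine apply_eq_of_eqv classUnion (fun S T hST => ?_) h
  rcases genRel_cases hST with ⟨hS, hT⟩ | ⟨i, j, rfl, rfl⟩
  · rw [classUnion_of_isLine hS, classUnion_of_isLine hT]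
  · rw [classUnion_rowArm hm, classUnion_colArm hm]

theorem not_isLine_subset_rowArm_union_colArm {L : Set (m × n)} (hL : IsLine L) (i : m)
    (j : n) : ¬ L ⊆ rowArm i j ∪ colArm i j := by
  rcases hL with ⟨a, rfl⟩ | ⟨b, rfl⟩
  · obtain ⟨j', hj'⟩ := exists_ne j
    by_cases ha : a = i
    · subst ha
      intro h
      simpa [rowArm, colArm] using h (show (a, j) ∈ _ from ⟨rfl, trivial⟩)
    · intro h
      simpa [rowArm, colArm, ha, hj'] using h (show (a, j') ∈ _ from ⟨rfl, trivial⟩)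
  · obtain ⟨i', hi'⟩ := exists_ne i
    by_cases hb : b = j
    · subst hb
      intro h
      simpa [rowArm, colArm] using h (show (i, b) ∈ _ from ⟨trivial, rfl⟩)
    · intro h
      simpa [rowArm, colArm, hb, hi'] using h (show (i', b) ∈ _ from ⟨trivial, rfl⟩)

theorem IsLine.of_line_subset {L b : Set (m × n)} (hL : IsLine L) (hb : Axial b)
    (h : L ⊆ b) : IsLine b := by
  rcases hL with ⟨i, rfl⟩ | ⟨j, rfl⟩ <;> rcases hb with ⟨a, J, rfl⟩ | ⟨I, c, rfl⟩
  · have hJ : J = univ := eq_univ_of_forall fun j => (h (mk_mem_prod rfl (mem_univ j))).2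
    exact Or.inl ⟨a, by rw [hJ]⟩
  · obtain ⟨j, hj⟩ := exists_ne c
    exact absurd (h (mk_mem_prod rfl (mem_univ j))).2 hj
  · obtain ⟨i, hi⟩ := exists_ne a
    exact absurd (h (mk_mem_prod (mem_univ i) rfl)).1 hi
  · have hI : I = univ := eq_univ_of_forall fun i => (h (mk_mem_prod (mem_univ i) rfl)).1
    exact Or.inr ⟨c, by rw [hI]⟩

theorem IsLine.of_line_subset_classUnion (hm : 2 < Cardinal.mk m) {L b : Set (m × n)}
    (hL : IsLine L) (hb : Axial b) (h : L ⊆ classUnion b) : IsLine b := by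
  by_contra hnb
  by_cases harm : ∃ i j, b = rowArm i j ∨ b = colArm i j
  · obtain ⟨i, j, rfl | rfl⟩ := harm
    · rw [classUnion_rowArm hm] at h
      exact not_isLine_subset_rowArm_union_colArm hL i j h
    · rw [classUnion_colArm hm] at h
      exact not_isLine_subset_rowArm_union_colArm hL i j h
  · simp only [not_exists, not_or] at harm
    rw [classUnion_of_not_arm hnb harm] at h
    exact hnb (hL.of_line_subset hb h)

theorem mem_classUnion_of_qLesim (hm : 2 < Cardinal.mk m) (hn : 2 < Cardinal.mk n)
    {p : m × n} {b : Set (m × n)} (h : qLesim {p} b) : p ∈ classUnion b := by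
  rcases h with h | ⟨S', C, -, -, hS', -, -, hb⟩
  · exact classUnion_eq_of_eqv hm h ▸ subset_classUnion _ rfl
  · obtain rfl := eq_singleton_of_eqv hm hn hS'
    exact classUnion_eq_of_eqv hm hb ▸ subset_classUnion _ (Or.inl rfl)

theorem qLesim_of_forall_singleton (hm : 2 < Cardinal.mk m) (hn : 2 < Cardinal.mk n)
    {L b : Set (m × n)} (hL : IsLine L) (hb : Axial b) (h : ∀ p ∈ L, qLesim {p} b) :
    qLesim L b :=
  .inl <| eqv_of_isLine hL <| hL.of_line_subset_classUnion hm hb fun p hp =>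
    mem_classUnion_of_qLesim hm hn (h p hp)

end Nontrivial

def IsLesimComplete {X : Type} (θ : Set (m × n) → Set X) : Prop :=
  ∀ 𝒮 : Set (Set (m × n)), (∀ S ∈ 𝒮, Axial S) →
    (∀ S ∈ 𝒮, ∀ T ∈ 𝒮, ¬ eqv S T → qDefined S T) →
    ∀ a : Set (m × n), Axial a → (∀ S ∈ 𝒮, qLesim S a) →
      (∀ b : Set (m × n), Axial b → (∀ S ∈ 𝒮, qLesim S b) → qLesim a b) →
      θ a = ⋃ S ∈ 𝒮, θ S

theorem IsLesimComplete.line_eq_biUnion [Nontrivial m] [Nontrivial n] (hm : 2 < Cardinal.mk m)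
    (hn : 2 < Cardinal.mk n) {X : Type} {θ : Set (m × n) → Set X} (hθ : IsLesimComplete θ)
    {L : Set (m × n)} (hL : IsLine L) : θ L = ⋃ p ∈ L, θ {p} := by
  rw [hθ ((fun p => {p}) '' L) ?_ ?_ L hL.axial ?_ ?_, biUnion_image]
  · rintro _ ⟨p, hp, rfl⟩
    exact axial_of_subset_line hL (singleton_subset_iff.2 hp)
  · rintro _ ⟨p, hp, rfl⟩ _ ⟨q, hq, rfl⟩ hpq
    exact qDefined_singleton hL hp hq fun h => hpq (h ▸ .refl _)
  · rintro _ ⟨p, hp, rfl⟩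
    exact qLesim_singleton_of_mem hL hp
  · exact fun b hb h => qLesim_of_forall_singleton hm hn hL hb fun p hp => h _ ⟨p, hp, rfl⟩

section Representation

variable {X : Type} {θ : Set (m × n) → Set X}

theorem rep_singleton_nonempty [Nontrivial m] [Nontrivial n] (hm : 2 < Cardinal.mk m) (hn : 2 < Cardinal.mk n)
    (hfaith : ∀ S T, Axial S → Axial T → θ S = θ T → eqv S T) (hzero : θ ∅ = ∅) (p : m × n) :
    (θ {p}).Nonempty := by
  have hax : Axial (∅ : Set (m × n)) := .inl ⟨p.1, ∅, prod_empty.symm⟩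
  refine nonempty_iff_ne_empty.2 fun h => singleton_ne_empty p ?_
  have hp := hfaith _ _ (axial_of_subset_line (.inl ⟨p.1, rfl⟩) (by simp)) hax (h.trans hzero.symm)
  exact (eq_singleton_of_eqv hm hn hp).symm

theorem exists_mem_rep_singleton [Nontrivial m] [Nontrivial n] (hm : 2 < Cardinal.mk m)
    (hn : 2 < Cardinal.mk n) (hfaith : ∀ S T, Axial S → Axial T → eqv S T → θ S = θ T)
    (hθ : IsLesimComplete θ) {L L' : Set (m × n)} (hL : IsLine L) (hL' : IsLine L') {x : X}
    (hx : x ∈ θ L') : ∃ p ∈ L, x ∈ θ {p} := by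
  rw [hfaith _ _ hL'.axial hL.axial (eqv_of_isLine hL' hL), hθ.line_eq_biUnion hm hn hL] at hx
  simpa using hx

theorem eq_of_mem_rep_singleton (hdef : ∀ S T, Axial S → Axial T → qDefined S T → θ S ∩ θ T = ∅)
    {L : Set (m × n)} (hL : IsLine L) {p q : m × n} (hp : p ∈ L) (hq : q ∈ L) {x : X}
    (hxp : x ∈ θ {p}) (hxq : x ∈ θ {q}) : p = q := by
  by_contra hpq
  have hax : ∀ r ∈ L, Axial ({r} : Set (m × n)) :=
    fun r hr => axial_of_subset_line hL (singleton_subset_iff.2 hr)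
  exact (hdef _ _ (hax p hp) (hax q hq) (qDefined_singleton hL hp hq hpq)).subset ⟨hxp, hxq⟩

end Representation

theorem stmt_13_general {m n : Type} (hm : 2 < Cardinal.mk m) (hn : 2 < Cardinal.mk n)
    (X : Type) (θ : Set (m × n) → Set X)
    (hfaith : ∀ S T : Set (m × n), Axial S → Axial T → (eqv S T ↔ θ S = θ T))
    (hzero : θ (∅ : Set (m × n)) = ∅)
    (hdef : ∀ S T : Set (m × n), Axial S → Axial T → (qDefined S T ↔ θ S ∩ θ T = ∅))
    (hcomp : ∀ 𝒮 : Set (Set (m × n)), (∀ S ∈ 𝒮, Axial S) →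
      (∀ S ∈ 𝒮, ∀ T ∈ 𝒮, ¬ eqv S T → qDefined S T) →
      ∀ a : Set (m × n), Axial a → (∀ S ∈ 𝒮, qLesim S a) →
        (∀ b : Set (m × n), Axial b → (∀ S ∈ 𝒮, qLesim S b) → qLesim a b) →
        θ a = ⋃ S ∈ 𝒮, θ S) :
    Nonempty (m ≃ n) ∧
    ∀ (i₀ : m) (x : X), x ∈ θ ({i₀} ×ˢ (Set.univ : Set n)) →
      (∀ i : m, ∃! j : n, x ∈ θ ({(i, j)} : Set (m × n))) ∧
      (∀ j : n, ∃! i : m, x ∈ θ ({(i, j)} : Set (m × n))) := by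
  have : Nontrivial m := Cardinal.one_lt_iff_nontrivial.1 (Cardinal.one_lt_two.trans hm)
  have : Nontrivial n := Cardinal.one_lt_iff_nontrivial.1 (Cardinal.one_lt_two.trans hn)
  have hrow (i : m) : IsLine ({i} ×ˢ univ : Set (m × n)) := .inl ⟨i, rfl⟩
  have hcol (j : n) : IsLine (univ ×ˢ {j} : Set (m × n)) := .inr ⟨j, rfl⟩
  have hex {L L' : Set (m × n)} (hL : IsLine L) (hL' : IsLine L') {x : X} (hx : x ∈ θ L') :=
    exists_mem_rep_singleton hm hn (fun S T hS hT => (hfaith S T hS hT).1) hcomp hL hL' hx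
  have huniq {L : Set (m × n)} (hL : IsLine L) {p q : m × n} (hp : p ∈ L) (hq : q ∈ L) {x : X}
      (hxp : x ∈ θ {p}) (hxq : x ∈ θ {q}) :=
    eq_of_mem_rep_singleton (fun S T hS hT => (hdef S T hS hT).1) hL hp hq hxp hxq
  have hbij (i₀ : m) (x : X) (hx : x ∈ θ ({i₀} ×ˢ univ)) :
      (∀ i, ∃! j, x ∈ θ {(i, j)}) ∧ ∀ j, ∃! i, x ∈ θ {(i, j)} := by
    refine ⟨fun i => ?_, fun j => ?_⟩
    · obtain ⟨⟨i', j⟩, ⟨hi' : i' = i, -⟩, hxj⟩ := hex (hrow i) (hrow i₀) hx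
      subst i'
      exact ⟨j, hxj, fun j' hxj' => congrArg Prod.snd <|
        huniq (hrow i) (mk_mem_prod rfl (mem_univ j')) (mk_mem_prod rfl (mem_univ j)) hxj' hxj⟩
    · obtain ⟨⟨i, j'⟩, ⟨-, hj' : j' = j⟩, hxi⟩ := hex (hcol j) (hrow i₀) hx
      subst j'
      exact ⟨i, hxi, fun i' hxi' => congrArg Prod.fst <|
        huniq (hcol j) (mk_mem_prod (mem_univ i') rfl) (mk_mem_prod (mem_univ i) rfl) hxi' hxi⟩
  obtain ⟨i₀, j₀⟩ : m × n := Classical.arbitrary _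
  obtain ⟨x, hx⟩ :=
    rep_singleton_nonempty hm hn (fun S T hS hT => (hfaith S T hS hT).2) hzero (i₀, j₀)
  have hx₀ : x ∈ θ ({i₀} ×ˢ univ) := by
    rw [IsLesimComplete.line_eq_biUnion hm hn hcomp (hrow i₀)]
    exact mem_biUnion (mk_mem_prod rfl (mem_univ j₀)) hx
  exact ⟨nonempty_equiv_of_existsUnique (hbij i₀ x hx₀).1 (hbij i₀ x hx₀).2, hbij⟩

/-- for `m, n` of cardinality greater than two, if the quotient partial
algebra `A(m,n)` has a `≲`-complete `(∪•, ∅)`-representation `θ`, then `|m| = |n|`;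
specifically, for any point `x` in the representation of the top element `1` (the class
of `{i₀} × n`), the relation `R = {(i,j) : x ∈ θ([{(i,j)}])}` is a bijection between
`m` and `n`. -/
theorem stmt_13 {m n : Type} (hm : 2 < Cardinal.mk m) (hn : 2 < Cardinal.mk n)
    (X : Type) (θ : Set (m × n) → Set X)
    (hfaith : ∀ S T : Set (m × n), Axial S → Axial T → (eqv S T ↔ θ S = θ T))
    (hzero : θ (∅ : Set (m × n)) = ∅)
    (hdef : ∀ S T : Set (m × n), Axial S → Axial T → (qDefined S T ↔ θ S ∩ θ T = ∅))
    (hop : ∀ S T : Set (m × n), Axial S → Axial T → S ∩ T = ∅ → Axial (S ∪ T) →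
      θ (S ∪ T) = θ S ∪ θ T)
    (hcomp : ∀ 𝒮 : Set (Set (m × n)), (∀ S ∈ 𝒮, Axial S) →
      (∀ S ∈ 𝒮, ∀ T ∈ 𝒮, ¬ eqv S T → qDefined S T) →
      ∀ a : Set (m × n), Axial a → (∀ S ∈ 𝒮, qLesim S a) →
        (∀ b : Set (m × n), Axial b → (∀ S ∈ 𝒮, qLesim S b) → qLesim a b) →
        θ a = ⋃ S ∈ 𝒮, θ S) :
    Nonempty (m ≃ n) ∧
    ∀ (i₀ : m) (x : X), x ∈ θ ({i₀} ×ˢ (Set.univ : Set n)) →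
      (∀ i : m, ∃! j : n, x ∈ θ ({(i, j)} : Set (m × n))) ∧
      (∀ j : n, ∃! i : m, x ∈ θ ({(i, j)} : Set (m × n))) :=
  stmt_13_general hm hn X θ hfaith hzero hdef hcomp
end

section
/- For each integer m ≥ 3, the finite partial algebra A(m, m+1) has no (∪•, ∅)-representation by sets. -/
open Set

theorem Nat.card_eq_of_existsUnique {α β : Type*} (R : α → β → Prop)
    (hleft : ∀ a, ∃! b, R a b) (hright : ∀ b, ∃! a, R a b) : Nat.card α = Nat.card β := by
  choose f hf using hleft
  have hRf : ∀ a b, R a b ↔ f a = b := fun a b => ⟨fun h => ((hf a).2 b h).symm, (· ▸ (hf a).1)⟩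
  refine Nat.card_congr (Equiv.ofBijective f ((Function.bijective_iff_existsUnique f).2 fun b => ?_))
  simpa only [hRf] using hright b

theorem Set.eq_biUnion_singleton_of_union_eq {ι X : Type*} {g : Set ι → Set X} (h0 : g ∅ = ∅)
    (hunion : ∀ s t, Disjoint s t → g (s ∪ t) = g s ∪ g t) {s : Set ι} (hs : s.Finite) :
    g s = ⋃ i ∈ s, g {i} := by
  induction s, hs using Set.Finite.induction_on with
  | empty => simp [h0]
  | @insert a s ha _ ih =>
    rw [biUnion_insert, ← ih, ← hunion _ _ (disjoint_singleton_left.2 ha),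
      singleton_union]

section Axial

variable {m n : Type}

theorem axial_singleton_prod (i : m) (J : Set n) : Axial ({i} ×ˢ J) := Or.inl ⟨i, J, rfl⟩

theorem axial_prod_singleton (I : Set m) (j : n) : Axial (I ×ˢ {j}) := Or.inr ⟨I, j, rfl⟩

theorem axial_empty [Nonempty m] : Axial (∅ : Set (m × n)) :=
  Or.inl ⟨Classical.arbitrary m, ∅, prod_empty.symm⟩

theorem qDefined_of_disjoint {S T : Set (m × n)} (hS : Axial S) (hT : Axial T)
    (hST : S ∩ T = ∅) (hU : Axial (S ∪ T)) : qDefined S T :=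
  ⟨S, T, hS, hT, .refl _, .refl _, hST, hU⟩

theorem genRel.nonempty [Nontrivial m] [Nontrivial n] {S T : Set (m × n)} (h : genRel S T) :
    S.Nonempty ∧ T.Nonempty := by
  rcases h with ⟨i, j, rfl, rfl⟩ | ⟨i, j, rfl, rfl⟩
  · obtain ⟨i'⟩ := ‹Nontrivial m›.to_nonempty
    obtain ⟨j'⟩ := ‹Nontrivial n›.to_nonempty
    exact ⟨⟨(i, j'), by simp⟩, ⟨(i', j), by simp⟩⟩
  · obtain ⟨j', hj'⟩ := exists_ne j
    obtain ⟨i', hi'⟩ := exists_ne i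
    exact ⟨⟨(i, j'), by simp [hj']⟩, ⟨(i', j), by simp [hi']⟩⟩

theorem eqv.nonempty_iff [Nontrivial m] [Nontrivial n] {S T : Set (m × n)} (h : eqv S T) :
    S.Nonempty ↔ T.Nonempty := by
  induction h with
  | rel S T h => exact iff_of_true h.nonempty.1 h.nonempty.2
  | refl => rfl
  | symm _ _ _ ih => exact ih.symm
  | trans _ _ _ _ _ ih₁ ih₂ => exact ih₁.trans ih₂

end Axial

section Representation

variable {m n X : Type} {θ : Set (m × n) → Set X}

theorem image_row_eq_image_col
    (hθ : ∀ S T, Axial S → Axial T → eqv S T → θ S = θ T) (i : m) (j : n) :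
    θ ({i} ×ˢ univ) = θ (univ ×ˢ {j}) :=
  hθ _ _ (axial_singleton_prod _ _) (axial_prod_singleton _ _) (.rel _ _ (Or.inl ⟨i, j, rfl, rfl⟩))

theorem image_row_nonempty [Nontrivial m] [Nontrivial n]
    (hθ : ∀ S T, Axial S → Axial T → θ S = θ T → eqv S T) (h0 : θ ∅ = ∅) (i : m) :
    (θ ({i} ×ˢ univ)).Nonempty := by
  obtain ⟨j⟩ := ‹Nontrivial n›.to_nonempty
  rw [nonempty_iff_ne_empty, ← h0]
  intro h
  have := (hθ _ _ (axial_singleton_prod _ _) axial_empty h).nonempty_iff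
  exact not_nonempty_empty (this.1 ⟨(i, j), by simp⟩)

theorem image_cell_inter_of_ne_right
    (hθ : ∀ S T, Axial S → Axial T → qDefined S T → θ S ∩ θ T = ∅)
    (i : m) {j j' : n} (hj : j ≠ j') : θ ({i} ×ˢ {j}) ∩ θ ({i} ×ˢ {j'}) = ∅ := by
  refine hθ _ _ (axial_singleton_prod _ _) (axial_singleton_prod _ _)
    (qDefined_of_disjoint (axial_singleton_prod _ _) (axial_singleton_prod _ _) ?_ ?_)
  · exact disjoint_iff_inter_eq_empty.1 (disjoint_prod.2 (Or.inr (disjoint_singleton.2 hj)))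
  · rw [← prod_union]; exact axial_singleton_prod _ _

theorem image_cell_inter_of_ne_left
    (hθ : ∀ S T, Axial S → Axial T → qDefined S T → θ S ∩ θ T = ∅)
    {i i' : m} (hi : i ≠ i') (j : n) : θ ({i} ×ˢ {j}) ∩ θ ({i'} ×ˢ {j}) = ∅ := by
  refine hθ _ _ (axial_prod_singleton _ _) (axial_prod_singleton _ _)
    (qDefined_of_disjoint (axial_prod_singleton _ _) (axial_prod_singleton _ _) ?_ ?_)
  · exact disjoint_iff_inter_eq_empty.1 (disjoint_prod.2 (Or.inl (disjoint_singleton.2 hi)))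
  · rw [← union_prod]; exact axial_prod_singleton _ _

variable (hadd : ∀ S T, Axial S → Axial T → S ∩ T = ∅ → Axial (S ∪ T) → θ (S ∪ T) = θ S ∪ θ T)
  (h0 : θ ∅ = ∅)
include hadd h0

theorem image_row_eq_biUnion [Finite n] (i : m) : θ ({i} ×ˢ univ) = ⋃ j, θ ({i} ×ˢ {j}) := by
  have hunion (s t : Set n) (hst : Disjoint s t) :
      θ ({i} ×ˢ (s ∪ t)) = θ ({i} ×ˢ s) ∪ θ ({i} ×ˢ t) := by
    rw [prod_union]
    refine hadd _ _ (axial_singleton_prod _ _) (axial_singleton_prod _ _)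
      (disjoint_iff_inter_eq_empty.1 (disjoint_prod.2 (Or.inr hst))) ?_
    rw [← prod_union]; exact axial_singleton_prod _ _
  simpa using eq_biUnion_singleton_of_union_eq (g := fun J => θ ({i} ×ˢ J))
    (by simpa using h0) hunion finite_univ

theorem image_col_eq_biUnion [Finite m] (j : n) : θ (univ ×ˢ {j}) = ⋃ i, θ ({i} ×ˢ {j}) := by
  have hunion (s t : Set m) (hst : Disjoint s t) :
      θ ((s ∪ t) ×ˢ {j}) = θ (s ×ˢ {j}) ∪ θ (t ×ˢ {j}) := by
    rw [union_prod]
    refine hadd _ _ (axial_prod_singleton _ _) (axial_prod_singleton _ _)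
      (disjoint_iff_inter_eq_empty.1 (disjoint_prod.2 (Or.inl hst))) ?_
    rw [← union_prod]; exact axial_prod_singleton _ _
  simpa using eq_biUnion_singleton_of_union_eq (g := fun I => θ (I ×ˢ {j}))
    (by simpa using h0) hunion finite_univ

theorem card_eq_of_representation [Finite m] [Finite n] [Nontrivial m] [Nontrivial n]
    (hθ : ∀ S T, Axial S → Axial T → (eqv S T ↔ θ S = θ T))
    (hdisj : ∀ S T, Axial S → Axial T → qDefined S T → θ S ∩ θ T = ∅) :
    Nat.card m = Nat.card n := by
  obtain ⟨i₀⟩ := ‹Nontrivial m›.to_nonempty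
  obtain ⟨j₀⟩ := ‹Nontrivial n›.to_nonempty
  have hrow_col := image_row_eq_image_col fun S T hS hT => (hθ S T hS hT).1
  obtain ⟨x, hx⟩ := image_row_nonempty (fun S T hS hT => (hθ S T hS hT).2) h0 i₀
  refine Nat.card_eq_of_existsUnique (fun i j => x ∈ θ ({i} ×ˢ {j})) (fun i => ?_) (fun j => ?_)
  · have hxi : x ∈ θ ({i} ×ˢ univ) := by rwa [hrow_col i j₀, ← hrow_col i₀ j₀]
    rw [image_row_eq_biUnion hadd h0, mem_iUnion] at hxi
    obtain ⟨j, hj⟩ := hxi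
    refine ⟨j, hj, fun j' hj' => by_contra fun hne => ?_⟩
    exact eq_empty_iff_forall_notMem.1 (image_cell_inter_of_ne_right hdisj i hne) x ⟨hj', hj⟩
  · have hxj : x ∈ θ (univ ×ˢ {j}) := by rwa [← hrow_col i₀ j]
    rw [image_col_eq_biUnion hadd h0, mem_iUnion] at hxj
    obtain ⟨i, hi⟩ := hxj
    refine ⟨i, hi, fun i' hi' => by_contra fun hne => ?_⟩
    exact eq_empty_iff_forall_notMem.1 (image_cell_inter_of_ne_left hdisj hne j) x ⟨hi', hi⟩

end Representation

/-- for each integer `m ≥ 3`, the finite quotient partial algebra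
`A(m, m+1)` has no `(∪•, ∅)`-representation by sets. -/
theorem stmt_14 (m : ℕ) (hm : 3 ≤ m) :
    ¬ ∃ (X : Type) (θ : Set (Fin m × Fin (m + 1)) → Set X),
      (∀ S T : Set (Fin m × Fin (m + 1)), Axial S → Axial T → (eqv S T ↔ θ S = θ T)) ∧
      θ (∅ : Set (Fin m × Fin (m + 1))) = ∅ ∧
      (∀ S T : Set (Fin m × Fin (m + 1)), Axial S → Axial T →
        (qDefined S T ↔ θ S ∩ θ T = ∅)) ∧
      (∀ S T : Set (Fin m × Fin (m + 1)), Axial S → Axial T → S ∩ T = ∅ →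
        Axial (S ∪ T) → θ (S ∪ T) = θ S ∪ θ T) := by
  rintro ⟨X, θ, hθ, h0, hdefined, hadd⟩
  have : Nontrivial (Fin m) := Fin.nontrivial_iff_two_le.2 (by omega)
  have : Nontrivial (Fin (m + 1)) := Fin.nontrivial_iff_two_le.2 (by omega)
  have hcard := card_eq_of_representation hadd h0 hθ fun S T hS hT => (hdefined S T hS hT).1
  simp at hcard
end

section
/- Let A = (A, ⊔•, −•, …) be a complemented partial algebra and θ a map from A to subsets of some set X. Then θ is a disjoint-union representation of the ⊔•-reduct if and only if θ is a subset-complement representation of the −•-reduct. -/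
/-! In either kind of representation the image of `θ` lies in `θ 1` and is closed under the
relative complement `θ 1 \ ·`, since `θ (1 −• a) = θ 1 \ θ a`. By De Morgan,
`s \ t = θ 1 \ (t ∪ (θ 1 \ s))` and `s ∪ t = θ 1 \ ((θ 1 \ s) \ t)`, so the image is closed under
differences of nested sets as soon as it is closed under disjoint unions, and conversely. Thus the
set a missing operation should produce is `θ c` for some `c`; the given operation, applied to `c`,
returns an element with the right image, which injectivity identifies, so `a ⊔• b = c`
resp. `a −• b = c` is defined. -/

open Function

namespace Set

variable {X : Type*} {S : Set (Set X)} {U s t : Set X}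

theorem sdiff_mem_of_union_mem (hU : ∀ s ∈ S, s ⊆ U) (hcompl : ∀ s ∈ S, U \ s ∈ S)
    (hunion : ∀ s ∈ S, ∀ t ∈ S, s ∩ t = ∅ → s ∪ t ∈ S)
    (hs : s ∈ S) (ht : t ∈ S) (hts : t ⊆ s) : s \ t ∈ S := by
  have hdisj : t ∩ (U \ s) = ∅ :=
    disjoint_iff_inter_eq_empty.1 (disjoint_sdiff_right.mono_left hts)
  have hdeMorgan : s \ t = U \ (t ∪ U \ s) := by
    have hsU := hU s hs
    ext x; simp only [mem_sdiff, mem_union]; have := @hsU x; tauto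
  rw [hdeMorgan]
  exact hcompl _ (hunion _ ht _ (hcompl _ hs) hdisj)

theorem union_mem_of_sdiff_mem (hU : ∀ s ∈ S, s ⊆ U) (hcompl : ∀ s ∈ S, U \ s ∈ S)
    (hsdiff : ∀ s ∈ S, ∀ t ∈ S, t ⊆ s → s \ t ∈ S)
    (hs : s ∈ S) (ht : t ∈ S) (hst : s ∩ t = ∅) : s ∪ t ∈ S := by
  have hsU := hU s hs
  have htU := hU t ht
  have hsub : t ⊆ U \ s := subset_sdiff.2 ⟨htU, (disjoint_iff_inter_eq_empty.2 hst).symm⟩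
  have hdeMorgan : s ∪ t = U \ ((U \ s) \ t) := by
    ext x; simp only [mem_sdiff, mem_union]; have := @hsU x; have := @htU x; tauto
  rw [hdeMorgan]
  exact hcompl _ (hsdiff _ (hcompl _ hs) _ ht hsub)

end Set

structure IsDisjointUnionRep_s16 {A X : Type*} (j : A → A → Option A) (θ : A → Set X) : Prop where
  injective : Injective θ
  isSome_iff : ∀ a b, (j a b).isSome ↔ θ a ∩ θ b = ∅
  eq_union : ∀ a b c, j a b = some c → θ c = θ a ∪ θ b

structure IsSubsetComplementRep {A X : Type*} (k : A → A → Option A) (θ : A → Set X) :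
    Prop where
  injective : Injective θ
  isSome_iff : ∀ a b, (k a b).isSome ↔ θ b ⊆ θ a
  eq_sdiff : ∀ a b c, k a b = some c → θ c = θ a \ θ b

section

variable {A X : Type*} {j k : A → A → Option A} {θ : A → Set X}

namespace IsDisjointUnionRep_s16

theorem eq_sdiff (h : IsDisjointUnionRep_s16 j θ)
    (habc : ∀ a b c : A, k a b = some c ↔ j b c = some a)
    {a b c : A} (hk : k a b = some c) : θ c = θ a \ θ b := by
  have hj := (habc a b c).1 hk
  rw [h.eq_union b c a hj, Set.union_sdiff_cancel_left
    ((h.isSome_iff b c).1 (Option.isSome_iff_exists.2 ⟨a, hj⟩)).subset]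

theorem subset_of_isSome (h : IsDisjointUnionRep_s16 j θ)
    (habc : ∀ a b c : A, k a b = some c ↔ j b c = some a)
    {a b : A} (hk : (k a b).isSome) : θ b ⊆ θ a := by
  obtain ⟨c, hc⟩ := Option.isSome_iff_exists.1 hk
  rw [h.eq_union b c a ((habc a b c).1 hc)]
  exact Set.subset_union_left

theorem sdiff_mem_range (h : IsDisjointUnionRep_s16 j θ)
    (habc : ∀ a b c : A, k a b = some c ↔ j b c = some a)
    {one : A} (hone : ∀ a, (k one a).isSome)
    {a b : A} (hba : θ b ⊆ θ a) : θ a \ θ b ∈ Set.range θ := by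
  refine Set.sdiff_mem_of_union_mem (U := θ one) ?_ ?_ ?_ ⟨a, rfl⟩ ⟨b, rfl⟩ hba
  · rintro _ ⟨a, rfl⟩
    exact h.subset_of_isSome habc (hone a)
  · rintro _ ⟨a, rfl⟩
    obtain ⟨c, hc⟩ := Option.isSome_iff_exists.1 (hone a)
    exact ⟨c, h.eq_sdiff habc hc⟩
  · rintro _ ⟨a, rfl⟩ _ ⟨b, rfl⟩ hab
    obtain ⟨c, hc⟩ := Option.isSome_iff_exists.1 ((h.isSome_iff a b).2 hab)
    exact ⟨c, h.eq_union a b c hc⟩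

theorem isSome_of_subset (h : IsDisjointUnionRep_s16 j θ)
    (habc : ∀ a b c : A, k a b = some c ↔ j b c = some a)
    {one : A} (hone : ∀ a, (k one a).isSome)
    {a b : A} (hba : θ b ⊆ θ a) : (k a b).isSome := by
  obtain ⟨c, hc⟩ := h.sdiff_mem_range habc hone hba
  obtain ⟨e, he⟩ := Option.isSome_iff_exists.1
    ((h.isSome_iff b c).2 (hc ▸ Set.inter_sdiff_self (θ b) (θ a)))
  have hea : e = a :=
    h.injective (by rw [h.eq_union b c e he, hc, Set.union_sdiff_cancel hba])
  exact Option.isSome_iff_exists.2 ⟨c, (habc a b c).2 (hea ▸ he)⟩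

theorem isSubsetComplementRep (h : IsDisjointUnionRep_s16 j θ)
    (habc : ∀ a b c : A, k a b = some c ↔ j b c = some a)
    {one : A} (hone : ∀ a, (k one a).isSome) : IsSubsetComplementRep k θ where
  injective := h.injective
  isSome_iff _ _ := ⟨h.subset_of_isSome habc, h.isSome_of_subset habc hone⟩
  eq_sdiff _ _ _ := h.eq_sdiff habc

end IsDisjointUnionRep_s16

namespace IsSubsetComplementRep

theorem eq_union (h : IsSubsetComplementRep k θ)
    (habc : ∀ a b c : A, k a b = some c ↔ j b c = some a)
    {a b c : A} (hj : j a b = some c) : θ c = θ a ∪ θ b := by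
  have hk := (habc c a b).2 hj
  rw [h.eq_sdiff c a b hk, Set.union_sdiff_cancel
    ((h.isSome_iff c a).1 (Option.isSome_iff_exists.2 ⟨b, hk⟩))]

theorem inter_eq_empty_of_isSome (h : IsSubsetComplementRep k θ)
    (habc : ∀ a b c : A, k a b = some c ↔ j b c = some a)
    {a b : A} (hj : (j a b).isSome) : θ a ∩ θ b = ∅ := by
  obtain ⟨c, hc⟩ := Option.isSome_iff_exists.1 hj
  rw [h.eq_sdiff c a b ((habc c a b).2 hc)]
  exact Set.inter_sdiff_self (θ a) (θ c)

theorem union_mem_range (h : IsSubsetComplementRep k θ)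
    {one : A} (hone : ∀ a, (k one a).isSome)
    {a b : A} (hab : θ a ∩ θ b = ∅) : θ a ∪ θ b ∈ Set.range θ := by
  refine Set.union_mem_of_sdiff_mem (U := θ one) ?_ ?_ ?_ ⟨a, rfl⟩ ⟨b, rfl⟩ hab
  · rintro _ ⟨a, rfl⟩
    exact (h.isSome_iff one a).1 (hone a)
  · rintro _ ⟨a, rfl⟩
    obtain ⟨c, hc⟩ := Option.isSome_iff_exists.1 (hone a)
    exact ⟨c, h.eq_sdiff one a c hc⟩
  · rintro _ ⟨a, rfl⟩ _ ⟨b, rfl⟩ hba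
    obtain ⟨c, hc⟩ := Option.isSome_iff_exists.1 ((h.isSome_iff a b).2 hba)
    exact ⟨c, h.eq_sdiff a b c hc⟩

theorem isSome_of_inter_eq_empty (h : IsSubsetComplementRep k θ)
    (habc : ∀ a b c : A, k a b = some c ↔ j b c = some a)
    {one : A} (hone : ∀ a, (k one a).isSome)
    {a b : A} (hab : θ a ∩ θ b = ∅) : (j a b).isSome := by
  obtain ⟨c, hc⟩ := h.union_mem_range hone hab
  obtain ⟨e, he⟩ := Option.isSome_iff_exists.1
    ((h.isSome_iff c a).2 (hc ▸ Set.subset_union_left))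
  have heb : e = b :=
    h.injective (by rw [h.eq_sdiff c a e he, hc, Set.union_sdiff_cancel_left hab.subset])
  exact Option.isSome_iff_exists.2 ⟨c, (habc c a b).1 (heb ▸ he)⟩

theorem isDisjointUnionRep (h : IsSubsetComplementRep k θ)
    (habc : ∀ a b c : A, k a b = some c ↔ j b c = some a)
    {one : A} (hone : ∀ a, (k one a).isSome) : IsDisjointUnionRep_s16 j θ where
  injective := h.injective
  isSome_iff _ _ := ⟨h.inter_eq_empty_of_isSome habc, h.isSome_of_inter_eq_empty habc hone⟩
  eq_union _ _ _ := h.eq_union habc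

end IsSubsetComplementRep

end

theorem stmt_16_general {A X : Type*} (j k : A → A → Option A)
    (habc : ∀ a b c : A, k a b = some c ↔ j b c = some a)
    (one : A) (hone : ∀ a, (k one a).isSome)
    (θ : A → Set X) :
    (Function.Injective θ ∧
      (∀ a b, (j a b).isSome ↔ θ a ∩ θ b = ∅) ∧
      (∀ a b c, j a b = some c → θ c = θ a ∪ θ b)) ↔
    (Function.Injective θ ∧
      (∀ a b, (k a b).isSome ↔ θ b ⊆ θ a) ∧
      (∀ a b c, k a b = some c → θ c = θ a \ θ b)) := by
  constructor
  · rintro ⟨hinj, hj, hunion⟩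
    obtain ⟨hinj, hk, hsdiff⟩ :=
      (IsDisjointUnionRep_s16.mk hinj hj hunion).isSubsetComplementRep habc hone
    exact ⟨hinj, hk, hsdiff⟩
  · rintro ⟨hinj, hk, hsdiff⟩
    obtain ⟨hinj, hj, hunion⟩ :=
      (IsSubsetComplementRep.mk hinj hk hsdiff).isDisjointUnionRep habc hone
    exact ⟨hinj, hj, hunion⟩

/-- let `A = (A, ⊔•, −•)` be a complemented partial algebra (i.e. it
satisfies `a −• b = c ⇔ b ⊔• c = a` and there is a unique element `1` with `1 −• a`
defined for all `a`) and let `θ` be a map from `A` to subsets of a set `X`.  Then `θ` is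
a disjoint-union representation of the `⊔•`-reduct iff it is a subset-complement
representation of the `−•`-reduct. -/
theorem stmt_16 {A X : Type*} (j k : A → A → Option A)
    (habc : ∀ a b c : A, k a b = some c ↔ j b c = some a)
    (one : A) (hone : ∀ a, (k one a).isSome)
    (huniq : ∀ e : A, (∀ a, (k e a).isSome) → e = one)
    (θ : A → Set X) :
    (Function.Injective θ ∧
      (∀ a b, (j a b).isSome ↔ θ a ∩ θ b = ∅) ∧
      (∀ a b c, j a b = some c → θ c = θ a ∪ θ b)) ↔
    (Function.Injective θ ∧
      (∀ a b, (k a b).isSome ↔ θ b ⊆ θ a) ∧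
      (∀ a b c, k a b = some c → θ c = θ a \ θ b)) :=
  stmt_16_general j k habc one hone θ
end

section
/- Let A be a structure with a ternary relation J, a binary operation ·, and constant 0 satisfying: J is single-valued and commutative; · is a semilattice operation (commutative, associative, idempotent); J(b,c,d) → J(a·b, a·c, a·d); J(a,0,a) for all a; and (∃c J(a,b,c)) ↔ a·b = 0. Then A has a representation by sets in which J(a,b,c) holds iff θ(a) ∩ θ(b) = ∅ and θ(a) ∪ θ(b) = θ(c), · is represented as intersection, and 0 as the empty set. The representation is given by mapping a to the set of proper ⊔•-prime filters containing a. -/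
/-- A proper ⊔•-prime filter for a structure `(A, J, ·)`: a nonempty proper subset `F`
with `a·b ∈ F ⇔ (a ∈ F ∧ b ∈ F)` such that `a ⊔• b ∈ F` implies `a ∈ F` or `b ∈ F`. -/
def IsPPF {A : Type*} (mul : A → A → A) (J : A → A → A → Prop) (F : Set A) : Prop :=
  F.Nonempty ∧ (∀ a b, mul a b ∈ F ↔ a ∈ F ∧ b ∈ F) ∧ F ≠ Set.univ ∧
    (∀ a b c, J a b c → c ∈ F → a ∈ F ∨ b ∈ F)

/-!
Read `·` as the meet of a semilattice, in which `J a b c` says that `c` is the join of the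
disjoint elements `a` and `b`. Distributivity of meets over these joins makes every join of
two elements below `b` again below `b`. Hence a filter that is maximal among those containing
`a` and avoiding `b` is `⊔•`-prime: if `x, y ∉ m`, maximality yields `f ∈ m` with
`f · x ≤ b` and `f · y ≤ b`, so `f · (x ⊔• y) ≤ b` and `x ⊔• y ∉ m`. Zorn's lemma thus
separates any `a ≰ b` by a proper `⊔•`-prime filter, which makes `a ↦ θ(a)` (here
`ppfsContaining J a`) injective; the remaining clauses follow because `0` is the bottom and
`a, b ≤ a ⊔• b`.
-/

section Representation

variable {α : Type*} [SemilatticeInf α] {J : α → α → α → Prop}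

def IsInfFilter (F : Set α) : Prop :=
  ∀ x y, x ⊓ y ∈ F ↔ x ∈ F ∧ y ∈ F

theorem IsInfFilter.mem_of_le {F : Set α} (hF : IsInfFilter F) {a b : α} (ha : a ∈ F)
    (hab : a ≤ b) : b ∈ F :=
  ((hF a b).1 (by rwa [inf_eq_left.2 hab])).2

theorem isInfFilter_Ici (a : α) : IsInfFilter (Set.Ici a) :=
  fun _ _ => le_inf_iff

theorem IsInfFilter.sUnion_of_isChain {c : Set (Set α)} (hc : IsChain (· ⊆ ·) c)
    (hF : ∀ F ∈ c, IsInfFilter F) : IsInfFilter (⋃₀ c) := by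
  intro x y
  constructor
  · rintro ⟨F, hFc, hxy⟩
    obtain ⟨hx, hy⟩ := (hF F hFc x y).1 hxy
    exact ⟨⟨F, hFc, hx⟩, ⟨F, hFc, hy⟩⟩
  · rintro ⟨⟨F₁, hF₁, hx⟩, ⟨F₂, hF₂, hy⟩⟩
    rcases hc.total hF₁ hF₂ with h | h
    · exact ⟨F₂, hF₂, (hF F₂ hF₂ x y).2 ⟨h hx, hy⟩⟩
    · exact ⟨F₁, hF₁, (hF F₁ hF₁ x y).2 ⟨hx, h hy⟩⟩

theorem IsInfFilter.adjoin {m : Set α} (hm : IsInfFilter m) (x : α) :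
    IsInfFilter {w | ∃ f ∈ m, f ⊓ x ≤ w} := by
  intro p q
  constructor
  · rintro ⟨f, hf, h⟩
    exact ⟨⟨f, hf, h.trans inf_le_left⟩, ⟨f, hf, h.trans inf_le_right⟩⟩
  · rintro ⟨⟨f, hf, hp⟩, ⟨g, hg, hq⟩⟩
    refine ⟨f ⊓ g, (hm f g).2 ⟨hf, hg⟩, le_inf ?_ ?_⟩
    · exact (inf_le_inf_right x inf_le_left).trans hp
    · exact (inf_le_inf_right x inf_le_right).trans hq

theorem exists_maximal_isInfFilter {a b : α} (hab : ¬a ≤ b) :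
    ∃ m, Maximal (fun F => IsInfFilter F ∧ a ∈ F ∧ b ∉ F) m := by
  obtain ⟨m, -, hm⟩ := zorn_subset_nonempty {F | IsInfFilter F ∧ a ∈ F ∧ b ∉ F}
    (fun c hcS hc ⟨F₀, hF₀⟩ => ⟨⋃₀ c,
      ⟨IsInfFilter.sUnion_of_isChain hc fun F hF => (hcS hF).1, ⟨F₀, hF₀, (hcS hF₀).2.1⟩,
        fun ⟨F, hF, hbF⟩ => (hcS hF).2.2 hbF⟩,
      fun _ => Set.subset_sUnion_of_mem⟩)
    (Set.Ici a) ⟨isInfFilter_Ici a, le_rfl, hab⟩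
  exact ⟨m, hm⟩

theorem exists_inf_le_of_maximal {a b : α} {m : Set α}
    (hm : Maximal (fun F => IsInfFilter F ∧ a ∈ F ∧ b ∉ F) m) {x : α} (hx : x ∉ m) :
    ∃ f ∈ m, f ⊓ x ≤ b := by
  by_contra! hb
  have hmG : m ⊆ {w | ∃ f ∈ m, f ⊓ x ≤ w} := fun w hw => ⟨w, hw, inf_le_left⟩
  have hxG : x ∈ {w | ∃ f ∈ m, f ⊓ x ≤ w} := ⟨a, hm.1.2.1, inf_le_right⟩
  exact hx (hm.2 ⟨hm.1.1.adjoin x, hmG hm.1.2.1, fun ⟨f, hf, h⟩ => hb f hf h⟩ hmG hxG)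

theorem join_le (hsv : ∀ a b c c', J a b c → J a b c' → c = c')
    (hdist : ∀ a b c d, J b c d → J (a ⊓ b) (a ⊓ c) (a ⊓ d))
    {u v w b : α} (hJ : J u v w) (hu : u ≤ b) (hv : v ≤ b) : w ≤ b := by
  have h := hdist b u v w hJ
  rw [inf_eq_right.2 hu, inf_eq_right.2 hv] at h
  exact inf_eq_right.1 (hsv u v w _ hJ h).symm

theorem isPPF_of_maximal (hsv : ∀ a b c c', J a b c → J a b c' → c = c')
    (hdist : ∀ a b c d, J b c d → J (a ⊓ b) (a ⊓ c) (a ⊓ d)) {a b : α} {m : Set α}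
    (hm : Maximal (fun F => IsInfFilter F ∧ a ∈ F ∧ b ∉ F) m) :
    IsPPF (· ⊓ ·) J m := by
  obtain ⟨hfilter, ham, hbm⟩ := hm.1
  refine ⟨⟨a, ham⟩, hfilter, fun h => hbm (h ▸ Set.mem_univ b), fun x y z hJ hz => ?_⟩
  by_contra! hxy
  obtain ⟨f, hf, hfx⟩ := exists_inf_le_of_maximal hm hxy.1
  obtain ⟨g, hg, hgy⟩ := exists_inf_le_of_maximal hm hxy.2
  have hfgz : (f ⊓ g) ⊓ z ≤ b := join_le hsv hdist (hdist (f ⊓ g) x y z hJ)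
    ((inf_le_inf_right x inf_le_left).trans hfx) ((inf_le_inf_right y inf_le_right).trans hgy)
  exact hbm (hfilter.mem_of_le ((hfilter _ z).2 ⟨(hfilter f g).2 ⟨hf, hg⟩, hz⟩) hfgz)

theorem exists_isPPF_of_not_le (hsv : ∀ a b c c', J a b c → J a b c' → c = c')
    (hdist : ∀ a b c d, J b c d → J (a ⊓ b) (a ⊓ c) (a ⊓ d)) {a b : α} (hab : ¬a ≤ b) :
    ∃ F, IsPPF (· ⊓ ·) J F ∧ a ∈ F ∧ b ∉ F := by
  obtain ⟨m, hm⟩ := exists_maximal_isInfFilter hab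
  exact ⟨m, isPPF_of_maximal hsv hdist hm, hm.1.2⟩

variable (J) in
def ppfsContaining (a : α) : Set (Set α) :=
  {F | IsPPF (· ⊓ ·) J F ∧ a ∈ F}

theorem ppfsContaining_injective (hsv : ∀ a b c c', J a b c → J a b c' → c = c')
    (hdist : ∀ a b c d, J b c d → J (a ⊓ b) (a ⊓ c) (a ⊓ d)) :
    Function.Injective (ppfsContaining J) := by
  have hle {a b : α} (h : ppfsContaining J a = ppfsContaining J b) : a ≤ b := by
    by_contra hab
    obtain ⟨F, hF, haF, hbF⟩ := exists_isPPF_of_not_le hsv hdist hab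
    have hFb : F ∈ ppfsContaining J b := h ▸ ⟨hF, haF⟩
    exact hbF hFb.2
  exact fun a b h => le_antisymm (hle h) (hle h.symm)

theorem ppfsContaining_inf (a b : α) :
    ppfsContaining J (a ⊓ b) = ppfsContaining J a ∩ ppfsContaining J b := by
  ext F
  constructor
  · rintro ⟨hF, hab⟩
    obtain ⟨ha, hb⟩ := (hF.2.1 a b).1 hab
    exact ⟨⟨hF, ha⟩, ⟨hF, hb⟩⟩
  · rintro ⟨⟨hF, ha⟩, -, hb⟩
    exact ⟨hF, (hF.2.1 a b).2 ⟨ha, hb⟩⟩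

theorem ppfsContaining_eq_empty_of_isBot {z : α} (hz : IsBot z) : ppfsContaining J z = ∅ := by
  refine Set.eq_empty_of_forall_notMem fun F ⟨⟨_, hfilter, hproper, _⟩, hzF⟩ => hproper ?_
  exact Set.eq_univ_of_forall fun x => IsInfFilter.mem_of_le hfilter hzF (hz x)

theorem ppfsContaining_union_of_join {a b c : α} (hJ : J a b c) (hac : a ≤ c) (hbc : b ≤ c) :
    ppfsContaining J a ∪ ppfsContaining J b = ppfsContaining J c := by
  ext F
  constructor
  · rintro (⟨hF, ha⟩ | ⟨hF, hb⟩)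
    · exact ⟨hF, IsInfFilter.mem_of_le hF.2.1 ha hac⟩
    · exact ⟨hF, IsInfFilter.mem_of_le hF.2.1 hb hbc⟩
  · rintro ⟨hF, hc⟩
    exact (hF.2.2.2 a b c hJ hc).imp (fun ha => ⟨hF, ha⟩) (fun hb => ⟨hF, hb⟩)

theorem left_le_of_join (hsv : ∀ a b c c', J a b c → J a b c' → c = c')
    (hdist : ∀ a b c d, J b c d → J (a ⊓ b) (a ⊓ c) (a ⊓ d)) {zero a b c : α}
    (hzero : J a zero a) (hJ : J a b c) (hab : a ⊓ b = zero) : a ≤ c := by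
  have h := hdist a a b c hJ
  rw [inf_idem, hab] at h
  exact inf_eq_left.1 (hsv a zero a _ hzero h).symm

theorem ppfsContaining_represents (zero : α)
    (hsv : ∀ a b c c', J a b c → J a b c' → c = c')
    (hcomm : ∀ a b c, J a b c → J b a c)
    (hdist : ∀ a b c d, J b c d → J (a ⊓ b) (a ⊓ c) (a ⊓ d))
    (hzero : ∀ a, J a zero a)
    (hdom : ∀ a b, (∃ c, J a b c) ↔ a ⊓ b = zero) :
    Function.Injective (ppfsContaining J) ∧
    (∀ a b, ppfsContaining J (a ⊓ b) = ppfsContaining J a ∩ ppfsContaining J b) ∧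
    ppfsContaining J zero = ∅ ∧
    ∀ a b c, J a b c ↔ (ppfsContaining J a ∩ ppfsContaining J b = ∅ ∧
      ppfsContaining J a ∪ ppfsContaining J b = ppfsContaining J c) := by
  have hinj := ppfsContaining_injective hsv hdist
  have hbot : IsBot zero := fun x => inf_eq_right.1 ((hdom x zero).1 ⟨x, hzero x⟩)
  have hempty : ppfsContaining J zero = ∅ := ppfsContaining_eq_empty_of_isBot hbot
  have hunion {a b c : α} (hJ : J a b c) :
      ppfsContaining J a ∪ ppfsContaining J b = ppfsContaining J c :=
    ppfsContaining_union_of_join hJ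
      (left_le_of_join hsv hdist (hzero a) hJ ((hdom a b).1 ⟨c, hJ⟩))
      (left_le_of_join hsv hdist (hzero b) (hcomm a b c hJ) ((hdom b a).1 ⟨c, hcomm a b c hJ⟩))
  refine ⟨hinj, ppfsContaining_inf, hempty, fun a b c =>
    ⟨fun hJ => ?_, fun ⟨hdisj, hunion_eq⟩ => ?_⟩⟩
  · rw [← ppfsContaining_inf, (hdom a b).1 ⟨c, hJ⟩]
    exact ⟨hempty, hunion hJ⟩
  · have hab : a ⊓ b = zero := hinj (by rw [ppfsContaining_inf, hdisj, hempty])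
    obtain ⟨d, hd⟩ := (hdom a b).2 hab
    rwa [← hinj ((hunion hd).symm.trans hunion_eq)]

end Representation

/-- any `(J, ·, 0)`-structure satisfying Ax(J,·,0) is represented by sets,
via the map sending `a` to the set of proper ⊔•-prime filters containing `a`: this map is
injective, represents `·` as intersection, `0` as `∅`, and `J(a,b,c)` holds iff the images
of `a` and `b` are disjoint with union the image of `c`. -/
theorem stmt_17 {A : Type*} (mul : A → A → A) (zero : A) (J : A → A → A → Prop)
    -- ⊔• is single valued
    (hsv : ∀ a b c c', J a b c → J a b c' → c = c')
    -- ⊔• is commutative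
    (hcomm : ∀ a b c, J a b c → J b a c)
    -- ·-semilattice
    (hmc : ∀ a b, mul a b = mul b a)
    (hma : ∀ a b c, mul (mul a b) c = mul a (mul b c))
    (hmi : ∀ a, mul a a = a)
    -- · distributes over ⊔•
    (hdist : ∀ a b c d, J b c d → J (mul a b) (mul a c) (mul a d))
    -- 0 is identity for ⊔•
    (hzero : ∀ a, J a zero a)
    -- domain of ⊔•
    (hdom : ∀ a b, (∃ c, J a b c) ↔ mul a b = zero) :
    Function.Injective (fun a : A => {F : Set A | IsPPF mul J F ∧ a ∈ F}) ∧
    (∀ a b : A, {F : Set A | IsPPF mul J F ∧ mul a b ∈ F} =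
      {F : Set A | IsPPF mul J F ∧ a ∈ F} ∩ {F : Set A | IsPPF mul J F ∧ b ∈ F}) ∧
    {F : Set A | IsPPF mul J F ∧ zero ∈ F} = ∅ ∧
    (∀ a b c : A, J a b c ↔
      ({F : Set A | IsPPF mul J F ∧ a ∈ F} ∩ {F : Set A | IsPPF mul J F ∧ b ∈ F} = ∅ ∧
       {F : Set A | IsPPF mul J F ∧ a ∈ F} ∪ {F : Set A | IsPPF mul J F ∧ b ∈ F} =
         {F : Set A | IsPPF mul J F ∧ c ∈ F})) := by
  let : Min A := ⟨mul⟩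
  let : SemilatticeInf A := SemilatticeInf.mk' hmc hma hmi
  exact ppfsContaining_represents zero hsv hcomm hdist hzero hdom
end

section
/- In the filter representation of a (J, ·, 0)-structure satisfying Ax(J,·,0): if a ≰ b (i.e., a·b ≠ a), then any filter maximal among filters containing a but not b is proper and ⊔•-prime. In particular, whenever c ⊔• d is defined and belongs to such a maximal filter F, then c ∈ F or d ∈ F. -/
/-!
Write `x ≤ y` for `x·y = x`. If `F` is maximal among the filters containing `a` but not `b`
and `x ∉ F`, then the filter generated by `F` and `x` contains `b`, i.e. `f·x ≤ b` for some
`f ∈ F`. Now let `c ⊔• d = e ∈ F` with `c, d ∉ F`, and take one `h ∈ F` with `h·c ≤ b` and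
`h·d ≤ b`. Distributivity gives `(h·c) ⊔• (h·d) = h·e`, and `⊔•` lies below every common
upper bound, so `h·e ≤ b`. As `h·e ∈ F`, this forces `b ∈ F`.
-/

/-- A filter for a meet-semilattice operation: a nonempty subset `F` with
`a·b ∈ F ⇔ (a ∈ F ∧ b ∈ F)`. -/
def IsFltr {A : Type*} (mul : A → A → A) (F : Set A) : Prop :=
  F.Nonempty ∧ ∀ a b, mul a b ∈ F ↔ a ∈ F ∧ b ∈ F

section Order

variable {A : Type*} {mul : A → A → A}

theorem mul_eq_self_of_mul_mul_eq_self [Std.Commutative mul] [Std.Associative mul]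
    [Std.IdempotentOp mul] {z x y : A} (h : mul z (mul x y) = z) : mul z x = z := by
  rw [← h, Std.Associative.assoc (op := mul), Std.Commutative.comm (op := mul) (mul x y) x,
    ← Std.Associative.assoc (op := mul) x x, Std.IdempotentOp.idempotent (op := mul)]

theorem mul_eq_self_of_mul_mul_eq_self' [Std.Commutative mul] [Std.Associative mul]
    [Std.IdempotentOp mul] {z x y : A} (h : mul z (mul x y) = z) : mul z y = z :=
  mul_eq_self_of_mul_mul_eq_self (by rwa [Std.Commutative.comm (op := mul) y x])

theorem mul_mul_eq_self [Std.Associative mul] {z x y : A} (hx : mul z x = z)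
    (hy : mul z y = z) : mul z (mul x y) = z := by
  rw [← Std.Associative.assoc (op := mul), hx, hy]

theorem mul_mul_eq_mul_of_mul_eq_self [Std.Associative mul] {w z t : A} (h : mul z t = z) :
    mul (mul w z) t = mul w z := by
  rw [Std.Associative.assoc (op := mul), h]

theorem mul_eq_self_of_join [Std.Commutative mul] {J : A → A → A → Prop}
    (hsv : ∀ a b c c', J a b c → J a b c' → c = c')
    (hdist : ∀ a b c d, J b c d → J (mul a b) (mul a c) (mul a d))
    {b c d e : A} (hJ : J c d e) (hc : mul c b = c) (hd : mul d b = d) : mul e b = e := by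
  have hJb := hdist b c d e hJ
  rw [Std.Commutative.comm (op := mul) b c, hc, Std.Commutative.comm (op := mul) b d, hd,
    Std.Commutative.comm (op := mul) b e] at hJb
  exact hsv _ _ _ _ hJb hJ

end Order

namespace IsFltr

variable {A : Type*} {mul : A → A → A} {F : Set A}

theorem mul_mem (hF : IsFltr mul F) {x y : A} (hx : x ∈ F) (hy : y ∈ F) : mul x y ∈ F :=
  (hF.2 x y).2 ⟨hx, hy⟩

theorem mem_of_mul_eq_self (hF : IsFltr mul F) {x y : A} (hx : x ∈ F) (hxy : mul x y = x) :
    y ∈ F :=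
  ((hF.2 x y).1 (hxy.symm ▸ hx)).2

end IsFltr

/-- The filter generated by a filter `F` and an element `x`. -/
def fltrAdjoin {A : Type*} (mul : A → A → A) (F : Set A) (x : A) : Set A :=
  {y | ∃ f ∈ F, mul (mul f x) y = mul f x}

section Adjoin

variable {A : Type*} {mul : A → A → A} {F : Set A}

theorem mem_fltrAdjoin_self [Std.Associative mul] [Std.IdempotentOp mul] (hF : IsFltr mul F)
    (x : A) : x ∈ fltrAdjoin mul F x := by
  obtain ⟨f, hf⟩ := hF.1
  refine ⟨f, hf, ?_⟩
  rw [Std.Associative.assoc (op := mul), Std.IdempotentOp.idempotent (op := mul)]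

theorem subset_fltrAdjoin [Std.Commutative mul] [Std.Associative mul] [Std.IdempotentOp mul]
    (x : A) : F ⊆ fltrAdjoin mul F x := fun f hf =>
  ⟨f, hf, by rw [Std.Associative.assoc (op := mul), Std.Commutative.comm (op := mul) x f,
    ← Std.Associative.assoc (op := mul), Std.IdempotentOp.idempotent (op := mul)]⟩

theorem exists_mem_of_mem_fltrAdjoin₂ [Std.Commutative mul] [Std.Associative mul]
    (hF : IsFltr mul F) {x x' y y' : A} (hy : y ∈ fltrAdjoin mul F x)
    (hy' : y' ∈ fltrAdjoin mul F x') :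
    ∃ h ∈ F, mul (mul h x) y = mul h x ∧ mul (mul h x') y' = mul h x' := by
  obtain ⟨f, hf, hfy⟩ := hy
  obtain ⟨g, hg, hgy'⟩ := hy'
  refine ⟨mul f g, hF.mul_mem hf hg, ?_, ?_⟩
  · rw [Std.Commutative.comm (op := mul) f g, Std.Associative.assoc (op := mul) g f x]
    exact mul_mul_eq_mul_of_mul_eq_self hfy
  · rw [Std.Associative.assoc (op := mul) f g x']
    exact mul_mul_eq_mul_of_mul_eq_self hgy'

theorem isFltr_fltrAdjoin [Std.Commutative mul] [Std.Associative mul] [Std.IdempotentOp mul]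
    (hF : IsFltr mul F) (x : A) : IsFltr mul (fltrAdjoin mul F x) := by
  refine ⟨⟨x, mem_fltrAdjoin_self hF x⟩, fun y z => ⟨?_, ?_⟩⟩
  · rintro ⟨f, hf, hfyz⟩
    exact ⟨⟨f, hf, mul_eq_self_of_mul_mul_eq_self hfyz⟩,
      ⟨f, hf, mul_eq_self_of_mul_mul_eq_self' hfyz⟩⟩
  · rintro ⟨hy, hz⟩
    obtain ⟨h, hh, hhy, hhz⟩ := exists_mem_of_mem_fltrAdjoin₂ hF hy hz
    exact ⟨h, hh, mul_mul_eq_self hhy hhz⟩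

theorem mem_fltrAdjoin_of_maximal [Std.Commutative mul] [Std.Associative mul]
    [Std.IdempotentOp mul] {a b x : A} (hF : IsFltr mul F) (haF : a ∈ F)
    (hmax : ∀ G : Set A, IsFltr mul G → a ∈ G → b ∉ G → F ⊆ G → G = F) (hx : x ∉ F) :
    b ∈ fltrAdjoin mul F x := by
  by_contra hb
  have hG := hmax _ (isFltr_fltrAdjoin hF x) (subset_fltrAdjoin x haF) hb (subset_fltrAdjoin x)
  exact hx (hG ▸ mem_fltrAdjoin_self hF x)

end Adjoin

theorem stmt_18_general {A : Type*} (mul : A → A → A) (J : A → A → A → Prop)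
    (hsv : ∀ a b c c', J a b c → J a b c' → c = c')
    (hmc : ∀ a b, mul a b = mul b a)
    (hma : ∀ a b c, mul (mul a b) c = mul a (mul b c))
    (hmi : ∀ a, mul a a = a)
    (hdist : ∀ a b c d, J b c d → J (mul a b) (mul a c) (mul a d))
    (a b : A)
    (F : Set A) (hF : IsFltr mul F) (haF : a ∈ F) (hbF : b ∉ F)
    (hmax : ∀ G : Set A, IsFltr mul G → a ∈ G → b ∉ G → F ⊆ G → G = F) :
    F ≠ Set.univ ∧ ∀ c d e, J c d e → e ∈ F → c ∈ F ∨ d ∈ F := by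
  have : Std.Commutative mul := ⟨hmc⟩
  have : Std.Associative mul := ⟨hma⟩
  have : Std.IdempotentOp mul := ⟨hmi⟩
  refine ⟨fun hU => hbF (hU ▸ Set.mem_univ b), fun c d e hJ heF => ?_⟩
  by_contra! hcd
  obtain ⟨h, hh, hhc, hhd⟩ := exists_mem_of_mem_fltrAdjoin₂ hF
    (mem_fltrAdjoin_of_maximal hF haF hmax hcd.1) (mem_fltrAdjoin_of_maximal hF haF hmax hcd.2)
  have hhe : mul (mul h e) b = mul h e := mul_eq_self_of_join hsv hdist (hdist h c d e hJ) hhc hhd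
  exact hbF (hF.mem_of_mul_eq_self (hF.mul_mem hh heF) hhe)

/-- in a `(J, ·, 0)`-structure satisfying Ax(J,·,0), if `a ≰ b`
(i.e. `a·b ≠ a`), then any filter maximal among filters containing `a` but not `b` is
proper and ⊔•-prime: whenever `c ⊔• d` is defined and belongs to it, then `c` or `d`
belongs to it. -/
theorem stmt_18 {A : Type*} (mul : A → A → A) (zero : A) (J : A → A → A → Prop)
    (hsv : ∀ a b c c', J a b c → J a b c' → c = c')
    (hcomm : ∀ a b c, J a b c → J b a c)
    (hmc : ∀ a b, mul a b = mul b a)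
    (hma : ∀ a b c, mul (mul a b) c = mul a (mul b c))
    (hmi : ∀ a, mul a a = a)
    (hdist : ∀ a b c d, J b c d → J (mul a b) (mul a c) (mul a d))
    (hzero : ∀ a, J a zero a)
    (hdom : ∀ a b, (∃ c, J a b c) ↔ mul a b = zero)
    (a b : A) (hab : mul a b ≠ a)
    (F : Set A) (hF : IsFltr mul F) (haF : a ∈ F) (hbF : b ∉ F)
    (hmax : ∀ G : Set A, IsFltr mul G → a ∈ G → b ∉ G → F ⊆ G → G = F) :
    F ≠ Set.univ ∧ ∀ c d e, J c d e → e ∈ F → c ∈ F ∨ d ∈ F :=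
  stmt_18_general mul J hsv hmc hma hmi hdist a b F hF haF hbF hmax
end

section
/- An equation s(ā) = t(ā) between (⊔•, 0)-terms is valid over all disjoint-union partial algebras of sets with zero (meaning: for every assignment of variables to sets, both sides are undefined, or both are defined and equal) if and only if (a) the set of variables occurring in s equals the set of variables occurring in t, and (b) the set of variables occurring more than once in s equals the set of variables occurring more than once in t. -/
/-- `(⊔•, 0)`-terms over a set `V` of variables. -/
inductive Trm (V : Type) where
  | var (v : V)
  | zero
  | join (s t : Trm V)

open Classical in
/-- Partial evaluation of a `(⊔•, 0)`-term in a disjoint-union partial algebra of sets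
with zero: `0` denotes `∅` and `s ⊔• t` is defined iff both sides are defined and
have disjoint values, in which case it denotes their union. -/
noncomputable def evalTrm {V X : Type} (ρ : V → Set X) : Trm V → Option (Set X)
  | .var v => some (ρ v)
  | .zero => some (∅ : Set X)
  | .join s t =>
    match evalTrm ρ s, evalTrm ρ t with
    | some S, some T => if S ∩ T = ∅ then some (S ∪ T) else none
    | _, _ => none

/-- The number of occurrences of a variable in a term. -/
def varCount {V : Type} [DecidableEq V] : Trm V → V → ℕ
  | .var w, v => if w = v then 1 else 0
  | .zero, _ => 0
  | .join s t, v => varCount s v + varCount t v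

/-! A term is defined under `ρ` iff `ρ` sends every repeated variable to `∅` and the occurring
variables to pairwise disjoint sets (`Trm.Admissible`), and its value is then the union of the
values of the occurring variables (`Trm.evalTrm_eq_ite`). So the evaluation depends only on the
sets of occurring and of repeated variables. Conversely, under the assignment sending `v` to a
singleton and every other variable to `∅`, a term is undefined iff `v` is repeated, and otherwise
its value records whether `v` occurs. -/

lemma Set.forall_disjoint_iff {ι α : Type*} (f : ι → Set α) (A B : Set ι) :
    (∀ i ∈ A, ∀ j ∈ B, Disjoint (f i) (f j)) ↔
      (∀ i ∈ A ∩ B, f i = ∅) ∧ ∀ ⦃i⦄, i ∈ A → ∀ ⦃j⦄, j ∈ B → i ≠ j → Disjoint (f i) (f j) := by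
  refine ⟨fun h => ⟨fun i hi => disjoint_self.1 (h i hi.1 i hi.2), fun i hi j hj _ => h i hi j hj⟩,
    fun ⟨hdiag, hoff⟩ i hi j hj => ?_⟩
  obtain rfl | hij := eq_or_ne i j
  · simp [hdiag i ⟨hi, hj⟩]
  · exact hoff hi hj hij

def pointAssignment {V : Type*} (v : V) : V → Set Unit := fun w => Set.ofPred fun _ => w = v

@[simp] lemma mem_pointAssignment {V : Type*} {v w : V} {x : Unit} :
    x ∈ pointAssignment v w ↔ w = v :=
  Iff.rfl

lemma pointAssignment_eq_empty_iff {V : Type*} {v w : V} : pointAssignment v w = ∅ ↔ w ≠ v := by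
  simp [Set.eq_empty_iff_forall_notMem]

lemma pairwiseDisjoint_pointAssignment {V : Type*} (v : V) (A : Set V) :
    A.PairwiseDisjoint (pointAssignment v) := by
  rintro w - w' - hww'
  rw [Function.onFun, Set.disjoint_left]
  rintro _ rfl rfl
  exact hww' rfl

namespace Trm

variable {V X : Type} [DecidableEq V]

def vars (u : Trm V) : Set V := {v | 0 < varCount u v}

def repeatedVars (u : Trm V) : Set V := {v | 1 < varCount u v}

@[simp] lemma vars_var (w : V) : (var w).vars = {w} := by
  ext v
  simp only [vars, varCount, Set.mem_ofPred_eq, Set.mem_singleton_iff]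
  split_ifs <;> grind

@[simp] lemma repeatedVars_var (w : V) : (var w).repeatedVars = ∅ := by
  ext v
  simp only [repeatedVars, varCount, Set.mem_ofPred_eq]
  split_ifs <;> simp

@[simp] lemma vars_zero : (zero : Trm V).vars = ∅ := by
  ext v; simp [vars, varCount]

@[simp] lemma repeatedVars_zero : (zero : Trm V).repeatedVars = ∅ := by
  ext v; simp [repeatedVars, varCount]

lemma vars_join (s t : Trm V) : (join s t).vars = s.vars ∪ t.vars := by
  ext v
  simp only [vars, varCount, Set.mem_ofPred_eq, Set.mem_union]
  omega

lemma repeatedVars_join (s t : Trm V) :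
    (join s t).repeatedVars = s.repeatedVars ∪ t.repeatedVars ∪ s.vars ∩ t.vars := by
  ext v
  simp only [repeatedVars, vars, varCount, Set.mem_ofPred_eq, Set.mem_union, Set.mem_inter_iff]
  omega

lemma repeatedVars_subset_vars (u : Trm V) : u.repeatedVars ⊆ u.vars :=
  fun _ (h : 1 < _) => (Nat.zero_lt_one.trans h : 0 < _)

def Admissible (ρ : V → Set X) (u : Trm V) : Prop :=
  (∀ v ∈ u.repeatedVars, ρ v = ∅) ∧ u.vars.PairwiseDisjoint ρ

lemma admissible_join {ρ : V → Set X} {s t : Trm V} :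
    Admissible ρ (join s t) ↔
      Admissible ρ s ∧ Admissible ρ t ∧ Disjoint (⋃ v ∈ s.vars, ρ v) (⋃ v ∈ t.vars, ρ v) := by
  simp_rw [Admissible, Set.disjoint_iUnion₂_left, Set.disjoint_iUnion₂_right,
    Set.forall_disjoint_iff, vars_join, repeatedVars_join, Set.pairwiseDisjoint_union,
    Set.mem_union, or_imp, forall_and]
  tauto

open Classical in
theorem evalTrm_eq_ite (ρ : V → Set X) (u : Trm V) :
    evalTrm ρ u = if Admissible ρ u then some (⋃ v ∈ u.vars, ρ v) else none := by
  induction u with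
  | var w => simp [evalTrm, Admissible]
  | zero => simp [evalTrm, Admissible]
  | join s t ihs iht =>
    rw [evalTrm, ihs, iht, admissible_join, vars_join, Set.biUnion_union]
    by_cases hs : Admissible ρ s <;> by_cases ht : Admissible ρ t <;>
      simp [hs, ht, Set.disjoint_iff_inter_eq_empty]

lemma evalTrm_congr {ρ : V → Set X} {s t : Trm V} (hvars : s.vars = t.vars)
    (hrep : s.repeatedVars = t.repeatedVars) : evalTrm ρ s = evalTrm ρ t := by
  classical
  have hadm : Admissible ρ s ↔ Admissible ρ t := by rw [Admissible, Admissible, hvars, hrep]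
  rw [evalTrm_eq_ite, evalTrm_eq_ite, hvars]
  exact if_congr hadm rfl rfl

open Classical in
lemma evalTrm_pointAssignment (v : V) (u : Trm V) :
    evalTrm (pointAssignment v) u =
      if v ∈ u.repeatedVars then none else some (Set.ofPred fun _ => v ∈ u.vars) := by
  have hadm : Admissible (pointAssignment v) u ↔ v ∉ u.repeatedVars := by
    simp only [Admissible, pointAssignment_eq_empty_iff, pairwiseDisjoint_pointAssignment,
      and_true]
    exact ⟨fun h hv => h v hv rfl, fun h w hw hwv => h (hwv ▸ hw)⟩
  have hval : ⋃ w ∈ u.vars, pointAssignment v w = Set.ofPred fun _ => v ∈ u.vars := by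
    ext; simp
  rw [evalTrm_eq_ite, hval, if_congr hadm rfl rfl, ite_not]

lemma vars_eq_and_repeatedVars_eq_of_evalTrm_pointAssignment_eq {s t : Trm V}
    (h : ∀ v, evalTrm (pointAssignment v) s = evalTrm (pointAssignment v) t) :
    s.vars = t.vars ∧ s.repeatedVars = t.repeatedVars := by
  have key : ∀ v, (v ∈ s.vars ↔ v ∈ t.vars) ∧ (v ∈ s.repeatedVars ↔ v ∈ t.repeatedVars) := by
    intro v
    have hv := h v
    rw [evalTrm_pointAssignment, evalTrm_pointAssignment] at hv
    split_ifs at hv with hs ht ht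
    · exact ⟨iff_of_true (s.repeatedVars_subset_vars hs) (t.repeatedVars_subset_vars ht),
        iff_of_true hs ht⟩
    · rw [Option.some_inj, Set.ext_iff] at hv
      exact ⟨hv (), iff_of_false hs ht⟩
  exact ⟨Set.ext fun v => (key v).1, Set.ext fun v => (key v).2⟩

end Trm

/-- an equation `s = t` between `(⊔•, 0)`-terms is valid over all
disjoint-union partial algebras of sets with zero (for every assignment, both sides are
undefined or both are defined and equal) iff `s` and `t` have the same set of occurring
variables and the same set of variables occurring more than once. -/
theorem stmt_19 {V : Type} [DecidableEq V] (s t : Trm V) :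
    (∀ (X : Type) (ρ : V → Set X), evalTrm ρ s = evalTrm ρ t) ↔
      ({v | 0 < varCount s v} = {v | 0 < varCount t v} ∧
       {v | 1 < varCount s v} = {v | 1 < varCount t v}) :=
  ⟨fun h => Trm.vars_eq_and_repeatedVars_eq_of_evalTrm_pointAssignment_eq fun _ => h Unit _,
    fun ⟨hvars, hrep⟩ _ _ => Trm.evalTrm_congr hvars hrep⟩
end
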